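/- arXiv:1608.02415 — 8 statements merged into one kernel-verified Lean document; each statement's English description precedes it below -/
import Mathlib

section
/- For any finite set A of at most 2(k+1) vertices in Z^d, there exists a translation vector x in the box {-(k+1),...,k+1}^d such that A is contained in the translated set V∘τ_x, where V is the disjoint union over x in (2k+3)Z^d of translates of the cube N = {1,...,2(k+1)}^d. -/
/-! Coordinate by coordinate: the at most `2(k+1)` values `a i` occupy fewer than `2k+3` residue
classes mod `2k+3`, so some class is free, and its representative of least absolute value lies in
`{-(k+1),…,k+1}`. -/

theorem ZMod.exists_notMem_image_intCast {n : ℕ} (S : Finset ℤ) (hS : S.card < n) :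
    ∃ r : ZMod n, r ∉ S.image ((↑) : ℤ → ZMod n) := by
  have : NeZero n := ⟨by omega⟩
  obtain ⟨r, -, hr⟩ := Finset.exists_mem_notMem_of_card_lt_card (s := S.image ((↑) : ℤ → ZMod n))
    (t := Finset.univ) (by rw [Finset.card_univ, ZMod.card]; exact Finset.card_image_le.trans_lt hS)
  exact ⟨r, hr⟩

theorem Int.exists_natAbs_le_half_forall_not_dvd_sub {n : ℕ} (S : Finset ℤ) (hS : S.card < n) :
    ∃ x : ℤ, x.natAbs ≤ n / 2 ∧ ∀ s ∈ S, ¬ (n : ℤ) ∣ s - x := by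
  have : NeZero n := ⟨by omega⟩
  obtain ⟨r, hr⟩ := ZMod.exists_notMem_image_intCast S hS
  refine ⟨r.valMinAbs, r.natAbs_valMinAbs_le, fun s hs hdvd => hr ?_⟩
  rw [← ZMod.coe_valMinAbs r, (ZMod.intCast_eq_intCast_iff_dvd_sub _ _ _).mpr hdvd]
  exact Finset.mem_image_of_mem _ hs

theorem stmt0_general (k d : ℕ) (A : Finset (Fin d → ℤ))
    (hA : A.card ≤ 2 * (k + 1)) :
    ∃ x : Fin d → ℤ, (∀ i, |x i| ≤ (k : ℤ) + 1) ∧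
      ∀ a ∈ A, ∀ i, ¬ ((2 * (k : ℤ) + 3) ∣ (a i - x i)) := by
  have coordinate (i : Fin d) :
      ∃ x : ℤ, x.natAbs ≤ (2 * k + 3) / 2 ∧ ∀ s ∈ A.image (· i), ¬ ((2 * k + 3 : ℕ) : ℤ) ∣ s - x :=
    Int.exists_natAbs_le_half_forall_not_dvd_sub _ (Finset.card_image_le.trans_lt (by omega))
  choose x hx_abs hx_dvd using coordinate
  refine ⟨x, fun i => ?_, fun a ha i => ?_⟩
  · rw [Int.abs_eq_natAbs]
    have := hx_abs i
    omega
  · exact_mod_cast hx_dvd i (a i) (Finset.mem_image_of_mem _ ha)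

/-- For any set `A` of at most `2(k+1)` vertices in `ℤ^d`, there is a translation
vector `x ∈ {-(k+1),…,k+1}^d` such that `A ⊆ 𝒱 + x`, where
`𝒱 = {y : y_i ≢ 0 mod (2k+3) for all i}` is the disjoint union of translates of the
cube `{1,…,2(k+1)}^d` over `(2k+3)ℤ^d`. -/
theorem stmt0 (k d : ℕ) (hd : 1 ≤ d) (A : Finset (Fin d → ℤ))
    (hA : A.card ≤ 2 * (k + 1)) :
    ∃ x : Fin d → ℤ, (∀ i, |x i| ≤ (k : ℤ) + 1) ∧
      ∀ a ∈ A, ∀ i, ¬ ((2 * (k : ℤ) + 3) ∣ (a i - x i)) :=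
  stmt0_general k d A hA
end

section
/- Let χ be the minimum of the family (π_z)_{z∈N} where N is a cube of (2k+2)^d vertices in Z^d and π_z is the sum of the 2d conductances incident to z, with i.i.d. conductances of distribution function F and π having distribution function F_π. Then for any a ≥ 0, (2k+2)^d F_π(a) − C(2,(2k+2)^d) F(a)^{4d−1} ≤ P[χ ≤ a] ≤ (2k+2)^d F_π(a), where C(2,m) = m(m−1)/2 is the binomial coefficient. -/
/-!
The event `{χ ≤ a}` is the union over `z ∈ N` of the events `{π_z ≤ a}`, each of probability
`F_π(a)` because every `π_z` is a sum of `2d` i.i.d. conductances. The union bound gives the upper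
bound and the second Bonferroni inequality the lower one, once each pairwise intersection is
controlled: two distinct vertices share at most one edge, so `{π_z ≤ a} ∩ {π_z' ≤ a}` forces at
least `4d - 1` independent (nonnegative) conductances to be `≤ a`.
-/

open MeasureTheory ProbabilityTheory Finset

theorem sum_measureReal_le_measureReal_biUnion_add_choose_two_mul {Ω ι : Type*}
    [MeasurableSpace Ω] {μ : Measure Ω} [IsFiniteMeasure μ] [DecidableEq ι]
    {A : ι → Set Ω} (hA : ∀ i, MeasurableSet (A i)) {c : ℝ} (s : Finset ι)
    (hc : ∀ i ∈ s, ∀ j ∈ s, i ≠ j → μ.real (A i ∩ A j) ≤ c) :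
    ∑ i ∈ s, μ.real (A i) ≤ μ.real (⋃ i ∈ s, A i) + ((#s).choose 2 : ℝ) * c := by
  induction s using Finset.induction_on with
  | empty => simp
  | insert a s ha ih =>
    have hinter : μ.real (A a ∩ ⋃ i ∈ s, A i) ≤ #s * c := by
      calc μ.real (A a ∩ ⋃ i ∈ s, A i) = μ.real (⋃ i ∈ s, A a ∩ A i) := by
            rw [Set.inter_iUnion₂]
        _ ≤ ∑ i ∈ s, μ.real (A a ∩ A i) := measureReal_biUnion_finset_le _ _
        _ ≤ ∑ _i ∈ s, c := sum_le_sum fun i hi ↦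
            hc a (mem_insert_self a s) i (mem_insert_of_mem hi) (ne_of_mem_of_not_mem hi ha).symm
        _ = #s * c := by rw [sum_const, nsmul_eq_mul]
    have hunion := measureReal_union_add_inter (μ := μ) (s := A a)
      (s.measurableSet_biUnion fun i _ ↦ hA i) (measure_ne_top _ _) (measure_ne_top _ _)
    have hchoose : ((#s + 1).choose 2 : ℝ) = (#s).choose 2 + #s := by
      rw [Nat.choose_succ_succ', Nat.choose_one_right]; push_cast; ring
    rw [sum_insert ha, set_biUnion_insert, card_insert_of_notMem ha, hchoose]
    linarith [ih fun i hi j hj ↦ hc i (mem_insert_of_mem hi) j (mem_insert_of_mem hj)]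

theorem Set.Finite.csInf_le_iff {α : Type*} [ConditionallyCompleteLinearOrder α] {s : Set α}
    (hs : s.Finite) (hne : s.Nonempty) {a : α} :
    sInf s ≤ a ↔ ∃ x ∈ s, x ≤ a :=
  ⟨fun h ↦ ⟨sInf s, hne.csInf_mem hs, h⟩,
    fun ⟨_, hx, hxa⟩ ↦ (csInf_le hs.bddBelow hx).trans hxa⟩

namespace ProbabilityTheory

variable {Ω ι κ β : Type*} [MeasurableSpace Ω] [MeasurableSpace β] {μ : Measure Ω}
  {w : ι → Ω → β}

theorem iIndepFun.identDistrib_comp_of_injective [IsProbabilityMeasure μ] [Fintype κ]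
    (hmeas : ∀ i, Measurable (w i)) (hindep : iIndepFun w μ)
    (hident : ∀ i j, IdentDistrib (w i) (w j) μ μ)
    {g g' : κ → ι} (hg : g.Injective) (hg' : g'.Injective) :
    IdentDistrib (fun ω p ↦ w (g p) ω) (fun ω p ↦ w (g' p) ω) μ μ where
  aemeasurable_fst := (measurable_pi_lambda _ fun p ↦ hmeas (g p)).aemeasurable
  aemeasurable_snd := (measurable_pi_lambda _ fun p ↦ hmeas (g' p)).aemeasurable
  map_eq := by
    rw [iIndepFun.map_fun_eq_pi_map (fun p ↦ (hmeas (g p)).aemeasurable) (hindep.precomp hg),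
      iIndepFun.map_fun_eq_pi_map (fun p ↦ (hmeas (g' p)).aemeasurable) (hindep.precomp hg')]
    exact congrArg Measure.pi (funext fun p ↦ (hident (g p) (g' p)).map_eq)

theorem iIndepFun.measureReal_biInter_preimage_eq_pow (hindep : iIndepFun w μ)
    (hident : ∀ i j, IdentDistrib (w i) (w j) μ μ) {S : Set β} (hS : MeasurableSet S)
    (U : Finset ι) (i₀ : ι) :
    μ.real (⋂ i ∈ U, w i ⁻¹' S) = μ.real (w i₀ ⁻¹' S) ^ #U := by
  rw [measureReal_def, hindep.meas_biInter fun i _ ↦ ⟨S, hS, rfl⟩, ENNReal.toReal_prod,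
    Finset.prod_congr rfl fun i _ ↦ congrArg ENNReal.toReal ((hident i i₀).measure_mem_eq hS),
    prod_const, measureReal_def]

end ProbabilityTheory

section Lattice

variable {d : ℕ}

/-- The pair `(x, i)` encodes the edge of `ℤ^d` between `x` and `x + eᵢ`. -/
def edgeEndpoints (e : (Fin d → ℤ) × Fin d) : Sym2 (Fin d → ℤ) :=
  s(e.1, e.1 + Pi.single e.2 1)

theorem edgeEndpoints_injective : Function.Injective (edgeEndpoints (d := d)) := by
  rintro ⟨x, i⟩ ⟨y, j⟩ h
  rcases Sym2.eq_iff.mp h with ⟨rfl, hxy⟩ | ⟨hxy, hyx⟩ <;> dsimp only at *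
  · have hij : i = j := by simpa [Pi.single_apply] using congrFun (add_left_cancel hxy) i
    rw [hij]
  · have := congrFun (hxy.trans (congrArg (· + Pi.single j 1) hyx.symm)) i
    simp only [Pi.add_apply, Pi.single_eq_same, Pi.single_apply] at this
    split_ifs at this <;> omega

def incidentEdge (z : Fin d → ℤ) : Fin d × Bool → (Fin d → ℤ) × Fin d
  | (i, false) => (z, i)
  | (i, true) => (z - Pi.single i 1, i)

theorem mem_edgeEndpoints_incidentEdge (z : Fin d → ℤ) (p : Fin d × Bool) :
    z ∈ edgeEndpoints (incidentEdge z p) := by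
  obtain ⟨i, _ | _⟩ := p <;> simp [edgeEndpoints, incidentEdge]

theorem incidentEdge_injective (z : Fin d → ℤ) : Function.Injective (incidentEdge z) := by
  rintro ⟨i, _ | _⟩ ⟨j, _ | _⟩ h <;> simp only [incidentEdge, Prod.mk.injEq] at h <;>
    obtain ⟨h, rfl⟩ := h
  all_goals first | rfl | (have := congrFun h i; simp at this <;> omega)

def incidentEdges (z : Fin d → ℤ) : Finset ((Fin d → ℤ) × Fin d) :=
  Finset.univ.image (incidentEdge z)

theorem card_incidentEdges (z : Fin d → ℤ) : #(incidentEdges z) = 2 * d := by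
  rw [incidentEdges, card_image_of_injective _ (incidentEdge_injective z), card_univ,
    Fintype.card_prod, Fintype.card_fin, Fintype.card_bool, mul_comm]

theorem card_inter_incidentEdges_le_one {z z' : Fin d → ℤ} (hz : z ≠ z') :
    #(incidentEdges z ∩ incidentEdges z') ≤ 1 := by
  have key : ∀ e ∈ incidentEdges z ∩ incidentEdges z', edgeEndpoints e = s(z, z') := by
    intro e he
    simp only [incidentEdges, mem_inter, mem_image, mem_univ, true_and] at he
    obtain ⟨⟨p, rfl⟩, ⟨q, hq⟩⟩ := he
    exact (Sym2.mem_and_mem_iff hz).mp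
      ⟨mem_edgeEndpoints_incidentEdge z p, hq ▸ mem_edgeEndpoints_incidentEdge z' q⟩
  exact card_le_one.mpr fun e he e' he' ↦
    edgeEndpoints_injective ((key e he).trans (key e' he').symm)

theorem card_union_incidentEdges {z z' : Fin d → ℤ} (hz : z ≠ z') :
    4 * d - 1 ≤ #(incidentEdges z ∪ incidentEdges z') := by
  have := card_union_add_card_inter (incidentEdges z) (incidentEdges z')
  have := card_inter_incidentEdges_le_one hz
  rw [card_incidentEdges, card_incidentEdges] at *
  omega

end Lattice

noncomputable def cube (d k : ℕ) : Finset (Fin d → ℤ) :=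
  Fintype.piFinset fun _ ↦ Icc 1 (2 * ((k : ℤ) + 1))

theorem card_cube (d k : ℕ) : #(cube d k) = (2 * (k + 1)) ^ d := by
  simp [cube, Fintype.card_piFinset, show (2 * ((k : ℤ) + 1)).toNat = 2 * (k + 1) by omega]

theorem sInf_cube_le_iff {d k : ℕ} (f : (Fin d → ℤ) → ℝ) (a : ℝ) :
    sInf {r | ∃ z : Fin d → ℤ, (∀ i, 1 ≤ z i ∧ z i ≤ 2 * ((k : ℤ) + 1)) ∧ r = f z} ≤ a ↔
      ∃ z ∈ cube d k, f z ≤ a := by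
  have himage : {r | ∃ z : Fin d → ℤ, (∀ i, 1 ≤ z i ∧ z i ≤ 2 * ((k : ℤ) + 1)) ∧ r = f z}
      = f '' cube d k := by
    ext r
    simp only [Set.mem_ofPred_eq, Set.mem_image, mem_coe, cube, Fintype.mem_piFinset, mem_Icc,
      eq_comm]
  have hne : (cube d k).Nonempty := ⟨fun _ ↦ 1, by simp [cube]; omega⟩
  rw [himage, ((cube d k).finite_toSet.image f).csInf_le_iff (hne.to_set.image f)]
  simp

section Conductances

variable {Ω : Type*} {d : ℕ} {w : (Fin d → ℤ) × Fin d → Ω → ℝ}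

def vertexConductance (w : (Fin d → ℤ) × Fin d → Ω → ℝ) (z : Fin d → ℤ) (ω : Ω) : ℝ :=
  ∑ p, w (incidentEdge z p) ω

theorem vertexConductance_eq_sum (w : (Fin d → ℤ) × Fin d → Ω → ℝ) (z : Fin d → ℤ) (ω : Ω) :
    vertexConductance w z ω
      = ∑ i, (w (z, i) ω + w ((fun j ↦ z j - if j = i then 1 else 0), i) ω) := by
  rw [vertexConductance, Fintype.sum_prod_type]
  refine sum_congr rfl fun i _ ↦ ?_
  simp only [Fintype.sum_bool, incidentEdge, add_comm]
  congr! 3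
  funext j
  simp [Pi.single_apply]

theorem le_vertexConductance (hnonneg : ∀ e ω, 0 ≤ w e ω) {z : Fin d → ℤ}
    {e : (Fin d → ℤ) × Fin d} (he : e ∈ incidentEdges z) (ω : Ω) :
    w e ω ≤ vertexConductance w z ω := by
  obtain ⟨p, -, rfl⟩ := mem_image.mp he
  exact single_le_sum (f := fun p ↦ w (incidentEdge z p) ω) (fun q _ ↦ hnonneg _ ω)
    (mem_univ p)

variable [MeasurableSpace Ω] {μ : Measure Ω} [IsProbabilityMeasure μ]

theorem measurable_vertexConductance (hmeas : ∀ e, Measurable (w e)) (z : Fin d → ℤ) :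
    Measurable (vertexConductance w z) := by
  unfold vertexConductance
  fun_prop

theorem identDistrib_vertexConductance (hmeas : ∀ e, Measurable (w e)) (hindep : iIndepFun w μ)
    (hident : ∀ e e', IdentDistrib (w e) (w e') μ μ) (z z' : Fin d → ℤ) :
    IdentDistrib (vertexConductance w z) (vertexConductance w z') μ μ :=
  (hindep.identDistrib_comp_of_injective hmeas hident (incidentEdge_injective z)
    (incidentEdge_injective z')).comp (by fun_prop)

theorem measureReal_vertexConductance_le_eq (hmeas : ∀ e, Measurable (w e))
    (hindep : iIndepFun w μ) (hident : ∀ e e', IdentDistrib (w e) (w e') μ μ)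
    (z z' : Fin d → ℤ) (a : ℝ) :
    μ.real {ω | vertexConductance w z ω ≤ a} = μ.real {ω | vertexConductance w z' ω ≤ a} :=
  congrArg ENNReal.toReal
    ((identDistrib_vertexConductance hmeas hindep hident z z').measure_mem_eq measurableSet_Iic)

theorem measureReal_vertexConductance_le_inter_le (hnonneg : ∀ e ω, 0 ≤ w e ω)
    (hindep : iIndepFun w μ) (hident : ∀ e e', IdentDistrib (w e) (w e') μ μ)
    {z z' : Fin d → ℤ} (hz : z ≠ z') (e₀ : (Fin d → ℤ) × Fin d) (a : ℝ) :
    μ.real ({ω | vertexConductance w z ω ≤ a} ∩ {ω | vertexConductance w z' ω ≤ a})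
      ≤ μ.real {ω | w e₀ ω ≤ a} ^ (4 * d - 1) := by
  have hsub : {ω | vertexConductance w z ω ≤ a} ∩ {ω | vertexConductance w z' ω ≤ a}
      ⊆ ⋂ e ∈ incidentEdges z ∪ incidentEdges z', w e ⁻¹' Set.Iic a := by
    rintro ω ⟨hωz, hωz'⟩
    simp only [Set.mem_iInter, mem_union]
    rintro e (he | he)
    · exact (le_vertexConductance hnonneg he ω).trans hωz
    · exact (le_vertexConductance hnonneg he ω).trans hωz'
  calc _ ≤ μ.real (⋂ e ∈ incidentEdges z ∪ incidentEdges z', w e ⁻¹' Set.Iic a) :=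
        measureReal_mono hsub
    _ = μ.real {ω | w e₀ ω ≤ a} ^ #(incidentEdges z ∪ incidentEdges z') :=
        hindep.measureReal_biInter_preimage_eq_pow hident measurableSet_Iic _ e₀
    _ ≤ μ.real {ω | w e₀ ω ≤ a} ^ (4 * d - 1) :=
        pow_le_pow_of_le_one measureReal_nonneg measureReal_le_one (card_union_incidentEdges hz)

end Conductances

/-- Bounds on the distribution function of `χ = min_{z ∈ N} π_z`, where `N` is the cube
`{1,…,2(k+1)}^d`, `π_z` is the sum of the `2d` conductances incident to `z`, and the
conductances are i.i.d. with distribution function `F`; `F_π` is the distribution function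
of `π`.  For `a ≥ 0`:
`(2k+2)^d F_π(a) − C((2k+2)^d, 2) F(a)^{4d−1} ≤ P[χ ≤ a] ≤ (2k+2)^d F_π(a)`. -/
theorem stmt2 {Ω : Type*} [MeasurableSpace Ω] (μ : Measure Ω) [IsProbabilityMeasure μ]
    (d k : ℕ) (hd : 0 < d)
    (w : ((Fin d → ℤ) × Fin d) → Ω → ℝ)
    (hmeas : ∀ e, Measurable (w e))
    (hpos : ∀ e ω, 0 < w e ω)
    (hindep : iIndepFun w μ)
    (hident : ∀ e e', IdentDistrib (w e) (w e') μ μ)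
    (F Fpi : ℝ → ℝ)
    (hF : ∀ a, F a = (μ {ω | w ((fun _ => 0), ⟨0, hd⟩) ω ≤ a}).toReal)
    (π : (Fin d → ℤ) → Ω → ℝ)
    (hπ : ∀ z ω, π z ω = ∑ i : Fin d,
        (w (z, i) ω + w ((fun j => z j - if j = i then 1 else 0), i) ω))
    (hFpi : ∀ a, Fpi a = (μ {ω | π (fun _ => 0) ω ≤ a}).toReal)
    (χ : Ω → ℝ)
    (hχ : ∀ ω, χ ω = sInf {r | ∃ z : Fin d → ℤ,
        (∀ i, 1 ≤ z i ∧ z i ≤ 2 * ((k : ℤ) + 1)) ∧ r = π z ω}) :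
    ∀ a : ℝ, 0 ≤ a →
      ((2 * (k + 1) : ℝ) ^ d * Fpi a
          - (Nat.choose ((2 * (k + 1)) ^ d) 2 : ℝ) * F a ^ (4 * d - 1)
        ≤ (μ {ω | χ ω ≤ a}).toReal) ∧
      (μ {ω | χ ω ≤ a}).toReal ≤ (2 * (k + 1) : ℝ) ^ d * Fpi a := by
  intro a _
  obtain rfl : π = vertexConductance w :=
    funext₂ fun z ω ↦ (hπ z ω).trans (vertexConductance_eq_sum w z ω).symm
  set N := cube d k
  set A : (Fin d → ℤ) → Set Ω := fun z ↦ {ω | vertexConductance w z ω ≤ a}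
  have hχN : {ω | χ ω ≤ a} = ⋃ z ∈ N, A z := by
    ext ω
    simp [A, N, hχ, sInf_cube_le_iff]
  have hcard : (#N : ℝ) = (2 * (k + 1) : ℝ) ^ d := by
    rw [card_cube]
    push_cast
    ring
  have hsum : ∑ z ∈ N, μ.real (A z) = #N * Fpi a := by
    rw [sum_congr rfl fun z _ ↦ measureReal_vertexConductance_le_eq hmeas hindep hident z 0 a,
      sum_const, nsmul_eq_mul, hFpi]
    rfl
  have hpair : ∀ z ∈ N, ∀ z' ∈ N, z ≠ z' → μ.real (A z ∩ A z') ≤ F a ^ (4 * d - 1) :=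
    fun z _ z' _ hz ↦ hF a ▸ measureReal_vertexConductance_le_inter_le
      (fun e ω ↦ (hpos e ω).le) hindep hident hz _ a
  rw [hχN, ← hcard, ← card_cube d k]
  change _ ≤ μ.real _ ∧ μ.real _ ≤ _
  constructor
  · have := sum_measureReal_le_measureReal_biUnion_add_choose_two_mul (A := A)
      (fun z ↦ measurableSet_le (measurable_vertexConductance hmeas z) measurable_const) N hpair
    linarith
  · exact hsum ▸ measureReal_biUnion_finset_le N A
end

section
/- Deterministic path/energy comparison: Let G=(V,E) be a subgraph of the nearest-neighbor lattice (Z^d, E_d) with d ≥ 2 and edge weights w_e > 0, and let C=(V_C, E_C) be a subgraph of G. Assume (i) there is μ > 0 with E^w_C(f) ≥ μ Σ_{x∈V_C} f(x)^2 for all f: V → ℝ supported in a set B ⊆ V, and (ii) there is an injective map φ: B∖V_C → V_C and, for each x ∈ B∖V_C, a self-avoiding directed path l(x,φ(x)) in G from x to φ(x) of length at most L ≥ 2 using only edges e with w_e > ν > 0. Then for all f supported in B: E^w_G(f) ≥ ((2L)^{d+1}/ν + 3/μ)^{-1} Σ_{x∈V} f(x)^2. -/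
/-!
A vertex `x ∈ B ∖ VC` is joined to `φ x ∈ VC` by a path of at most `L` edges of weight `> ν`, so
telescoping along the path and Cauchy–Schwarz give `f(x)² ≤ 2 f(φ x)² + (2L/ν) · (energy of f on the
path)`. Summing over `x`, injectivity of `φ` bounds the first terms by `2 ∑_{VC} f²`, which the
Poincaré inequality on `C` controls. An edge `p` can only lie on paths that start at ℓ¹-distance
`< L` from `p.1`, and there are at most `2^{d-1} L^d` such lattice points, so the path energies add
up to at most `2^{d-1} L^d` times the energy of `f` on `G`.
-/

open Finset

def l1Dist {ι : Type*} [Fintype ι] (a b : ι → ℤ) : ℕ := ∑ i, (a i - b i).natAbs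

section L1Dist

variable {ι : Type*} [Fintype ι]

theorem l1Dist_self (a : ι → ℤ) : l1Dist a a = 0 := by
  simp [l1Dist]

theorem l1Dist_comm (a b : ι → ℤ) : l1Dist a b = l1Dist b a := by
  simp only [l1Dist, ← Int.natAbs_neg (a _ - b _), neg_sub]

theorem l1Dist_triangle (a b c : ι → ℤ) : l1Dist a c ≤ l1Dist a b + l1Dist b c := by
  rw [l1Dist, l1Dist, l1Dist, ← sum_add_distrib]
  exact sum_le_sum fun i _ => by omega

end L1Dist

theorem l1Dist_succ {n : ℕ} (a b : Fin (n + 1) → ℤ) :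
    l1Dist a b = (a 0 - b 0).natAbs + l1Dist (Fin.tail a) (Fin.tail b) :=
  Fin.sum_univ_succ _

-- The number of points of `ℤⁿ` within ℓ¹-distance `r` of a point, counted by slicing along the
-- first coordinate.
noncomputable def latticeBallBound : ℕ → ℕ → ℕ
  | 0, _ => 1
  | n + 1, r => ∑ j ∈ Icc (-(r : ℤ)) r, latticeBallBound n (r - j.natAbs)

theorem card_le_latticeBallBound {n : ℕ} (r : ℕ) (a : Fin n → ℤ) (S : Finset (Fin n → ℤ))
    (hS : ∀ z ∈ S, l1Dist z a ≤ r) : #S ≤ latticeBallBound n r := by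
  induction n generalizing r with
  | zero => simpa [latticeBallBound] using card_le_one.mpr fun u _ v _ => Subsingleton.elim u v
  | succ n ih =>
    classical
    have hmaps : Set.MapsTo (fun z : Fin (n + 1) → ℤ => z 0 - a 0) S (Icc (-(r : ℤ)) r) := by
      intro z hz
      have := hS z hz
      rw [l1Dist_succ] at this
      simp only [coe_Icc, Set.mem_Icc]
      omega
    rw [card_eq_sum_card_fiberwise hmaps, latticeBallBound]
    refine sum_le_sum fun j _ => ?_
    have hinj : Set.InjOn (Fin.tail : (Fin (n + 1) → ℤ) → Fin n → ℤ)
        ({z ∈ S | z 0 - a 0 = j} : Finset _) := by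
      intro u hu v hv huv
      rw [mem_coe, mem_filter] at hu hv
      rw [← Fin.cons_self_tail u, ← Fin.cons_self_tail v, huv, show u 0 = v 0 by omega]
    rw [← card_image_of_injOn hinj]
    refine ih _ (Fin.tail a) _ ?_
    simp only [mem_image, mem_filter]
    rintro _ ⟨z, ⟨hz, rfl⟩, rfl⟩
    have := hS z hz
    rw [l1Dist_succ] at this
    omega

theorem latticeBallBound_one (r : ℕ) : latticeBallBound 1 r = 2 * r + 1 := by
  simp only [latticeBallBound, sum_const, Int.card_Icc, smul_eq_mul, mul_one]
  omega

theorem latticeBallBound_two (r : ℕ) :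
    latticeBallBound 2 r = ∑ j ∈ Icc (-(r : ℤ)) r, (2 * (r - j.natAbs) + 1) :=
  sum_congr rfl fun _ _ => latticeBallBound_one _

theorem latticeBallBound_two_le (r : ℕ) : latticeBallBound 2 r ≤ 2 * (r + 1) ^ 2 := by
  induction r with
  | zero => simp [latticeBallBound_two]
  | succ r ih =>
    have hIcc : Icc (-((r + 1 : ℕ) : ℤ)) ((r + 1 : ℕ) : ℤ) =
        insert (-(r + 1 : ℤ)) (insert (r + 1 : ℤ) (Icc (-(r : ℤ)) r)) := by
      ext j
      simp only [mem_Icc, mem_insert]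
      omega
    have hstep : latticeBallBound 2 (r + 1) = latticeBallBound 2 r + 4 * (r + 1) := by
      rw [latticeBallBound_two, latticeBallBound_two, hIcc, sum_insert (by simp; omega),
        sum_insert (by simp)]
      have hsum : ∑ j ∈ Icc (-(r : ℤ)) r, (2 * (r + 1 - j.natAbs) + 1) =
          ∑ j ∈ Icc (-(r : ℤ)) r, (2 * (r - j.natAbs) + 1 + 2) :=
        sum_congr rfl fun j hj => by simp only [mem_Icc] at hj; omega
      rw [hsum, sum_add_distrib, sum_const, Int.card_Icc, smul_eq_mul]
      omega
    rw [hstep]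
    nlinarith [ih]

theorem latticeBallBound_le (n r : ℕ) :
    latticeBallBound (n + 2) r ≤ 2 ^ (n + 1) * (r + 1) ^ (n + 2) := by
  induction n generalizing r with
  | zero => simpa using latticeBallBound_two_le r
  | succ n ih =>
    calc latticeBallBound (n + 3) r
        = ∑ j ∈ Icc (-(r : ℤ)) r, latticeBallBound (n + 2) (r - j.natAbs) := rfl
      _ ≤ ∑ _j ∈ Icc (-(r : ℤ)) r, 2 ^ (n + 1) * (r + 1) ^ (n + 2) :=
        sum_le_sum fun j _ => (ih _).trans (by gcongr; omega)
      _ = (2 * r + 1) * (2 ^ (n + 1) * (r + 1) ^ (n + 2)) := by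
        rw [sum_const, Int.card_Icc, smul_eq_mul]
        congr 1
        omega
      _ ≤ 2 * (r + 1) * (2 ^ (n + 1) * (r + 1) ^ (n + 2)) := by gcongr; omega
      _ = 2 ^ (n + 2) * (r + 1) ^ (n + 3) := by ring

theorem card_le_of_forall_l1Dist_lt {d r : ℕ} (hd : 2 ≤ d) (a : Fin d → ℤ)
    (S : Finset (Fin d → ℤ)) (hS : ∀ z ∈ S, l1Dist z a < r) : #S ≤ 2 ^ (d - 1) * r ^ d := by
  obtain ⟨n, rfl⟩ : ∃ n, d = n + 2 := ⟨d - 2, by omega⟩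
  obtain ⟨r, rfl⟩ | rfl : (∃ k, r = k + 1) ∨ r = 0 := by rcases r with _ | k <;> simp
  · exact (card_le_latticeBallBound r a S fun z hz => Nat.lt_succ_iff.mp (hS z hz)).trans
      (latticeBallBound_le n r)
  · simp [eq_empty_of_forall_notMem fun z hz => Nat.not_lt_zero _ (hS z hz)]

section Paths

variable {α : Type*}

theorem nodup_zip_tail {l : List α} (hl : l.Nodup) : (l.zip l.tail).Nodup :=
  List.Nodup.of_map Prod.snd <| by
    rw [List.map_snd_zip (by simp)]
    exact hl.sublist (List.tail_sublist l)

variable [DecidableEq α]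

def pathEdges (l : List α) : Finset (α × α) := (l.zip l.tail).toFinset

theorem pathEdges_cons_cons (a b : α) (l : List α) :
    pathEdges (a :: b :: l) = insert (a, b) (pathEdges (b :: l)) := by
  simp [pathEdges]

theorem rel_of_mem_pathEdges {R : α → α → Prop} {l : List α} (hl : l.IsChain R) {p : α × α}
    (hp : p ∈ pathEdges l) : R p.1 p.2 := by
  induction hl with
  | nil | singleton => simp [pathEdges] at hp
  | cons_cons hab _ ih =>
    rw [pathEdges_cons_cons, mem_insert] at hp
    rcases hp with rfl | hp
    exacts [hab, ih hp]

theorem card_pathEdges {l : List α} (hl : l.Nodup) : #(pathEdges l) = l.length - 1 := by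
  simp [pathEdges, List.toFinset_card_of_nodup (nodup_zip_tail hl)]

theorem sum_pathEdges_sub {G : Type*} [AddCommGroup G] (f : α → G) {l : List α} {x y : α}
    (hl : l.Nodup) (hx : l.head? = some x) (hy : l.getLast? = some y) :
    ∑ p ∈ pathEdges l, (f p.1 - f p.2) = f x - f y := by
  rw [pathEdges, List.sum_toFinset _ (nodup_zip_tail hl)]
  obtain ⟨t, rfl⟩ := List.head?_eq_some_iff.mp hx
  clear hx hl
  induction t generalizing x with
  | nil => simp_all
  | cons z t ih =>
    rw [List.getLast?_cons_cons] at hy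
    have ih := ih hy
    simp only [List.tail_cons] at ih ⊢
    rw [List.zip_cons_cons, List.map_cons, List.sum_cons, ih]
    abel

theorem sq_sub_le_mul_sum_pathEdges (f : α → ℝ) (w : α × α → ℝ) {ν : ℝ} (hν : 0 < ν) {L : ℕ}
    {l : List α} {x y : α} (hl : l.Nodup) (hx : l.head? = some x) (hy : l.getLast? = some y)
    (hlen : l.length ≤ L + 1) (hw : ∀ p ∈ pathEdges l, ν < w p) :
    (f x - f y) ^ 2 ≤ L / ν * ∑ p ∈ pathEdges l, w p * (f p.1 - f p.2) ^ 2 := by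
  calc (f x - f y) ^ 2 = (∑ p ∈ pathEdges l, (f p.1 - f p.2)) ^ 2 := by
        rw [sum_pathEdges_sub f hl hx hy]
    _ ≤ #(pathEdges l) * ∑ p ∈ pathEdges l, (f p.1 - f p.2) ^ 2 := sq_sum_le_card_mul_sum_sq
    _ ≤ L * ∑ p ∈ pathEdges l, ν⁻¹ * (w p * (f p.1 - f p.2) ^ 2) := by
        gcongr with p hp
        · rw [card_pathEdges hl]
          exact_mod_cast (by omega : l.length - 1 ≤ L)
        · rw [le_inv_mul_iff₀ hν]
          exact mul_le_mul_of_nonneg_right (hw p hp).le (sq_nonneg _)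
    _ = L / ν * ∑ p ∈ pathEdges l, w p * (f p.1 - f p.2) ^ 2 := by
        rw [← mul_sum, div_eq_mul_inv, mul_assoc]

theorem l1Dist_fst_lt_of_mem_pathEdges {ι : Type*} [Fintype ι] [DecidableEq ι]
    {l : List (ι → ℤ)} {x : ι → ℤ}
    (hl : l.IsChain fun a b => l1Dist a b ≤ 1) (hx : l.head? = some x) {p : (ι → ℤ) × (ι → ℤ)}
    (hp : p ∈ pathEdges l) : l1Dist p.1 x < l.length - 1 := by
  obtain ⟨t, rfl⟩ := List.head?_eq_some_iff.mp hx
  clear hx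
  induction t generalizing x with
  | nil => simp [pathEdges] at hp
  | cons z t ih =>
    rw [List.isChain_cons_cons] at hl
    rw [pathEdges_cons_cons, mem_insert] at hp
    rcases hp with rfl | hp
    · simp [l1Dist_self]
    · have := l1Dist_triangle p.1 z x
      have := ih hl.2 hp
      rw [l1Dist_comm] at hl
      simp only [List.length_cons] at *
      omega

end Paths

theorem sum_le_sum_sdiff_add_sum {ι : Type*} [DecidableEq ι] {V B C : Finset ι} {g : ι → ℝ}
    (hg : ∀ x, 0 ≤ g x) (hB : ∀ x ∉ B, g x = 0) : ∑ x ∈ V, g x ≤ ∑ x ∈ B \ C, g x + ∑ x ∈ C, g x :=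
  calc ∑ x ∈ V, g x = ∑ x ∈ V ∩ B, g x :=
        (sum_subset inter_subset_left fun x hxV hx =>
          hB x fun hxB => hx (mem_inter.mpr ⟨hxV, hxB⟩)).symm
    _ ≤ ∑ x ∈ (B \ C) ∪ C, g x :=
        sum_le_sum_of_subset_of_nonneg (by intro x; simp; tauto) fun x _ _ => hg x
    _ = ∑ x ∈ B \ C, g x + ∑ x ∈ C, g x := sum_union sdiff_disjoint

theorem sum_sum_le_mul_sum_of_card_filter_le {ι κ : Type*} [DecidableEq κ] {s : Finset ι}
    {E : Finset κ} {P : ι → Finset κ} {g : κ → ℝ} {M : ℕ} (hP : ∀ x ∈ s, P x ⊆ E)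
    (hM : ∀ p ∈ E, #{x ∈ s | p ∈ P x} ≤ M) (hg : ∀ p ∈ E, 0 ≤ g p) :
    ∑ x ∈ s, ∑ p ∈ P x, g p ≤ M * ∑ p ∈ E, g p := by
  rw [sum_comm' (t' := E) (s' := fun p => {x ∈ s | p ∈ P x})
    fun x p => by simpa using fun hx hp => hP x hx hp, mul_sum]
  refine sum_le_sum fun p hp => ?_
  rw [sum_const, nsmul_eq_mul]
  exact mul_le_mul_of_nonneg_right (by exact_mod_cast hM p hp) (hg p hp)

theorem sum_sq_le_of_paths {ι κ : Type*} [DecidableEq ι] [DecidableEq κ] {s t : Finset ι}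
    {E : Finset κ} {φ : ι → ι} {P : ι → Finset κ} {f : ι → ℝ} {g : κ → ℝ} {c : ℝ} {M : ℕ}
    (hφ : Set.InjOn φ s) (hφt : ∀ x ∈ s, φ x ∈ t) (hP : ∀ x ∈ s, P x ⊆ E)
    (hpath : ∀ x ∈ s, (f x - f (φ x)) ^ 2 ≤ c * ∑ p ∈ P x, g p)
    (hM : ∀ p ∈ E, #{x ∈ s | p ∈ P x} ≤ M) (hg : ∀ p ∈ E, 0 ≤ g p) (hc : 0 ≤ c) :
    ∑ x ∈ s, f x ^ 2 ≤ 2 * ∑ x ∈ t, f x ^ 2 + 2 * c * M * ∑ p ∈ E, g p := by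
  have himage : ∑ x ∈ s, f (φ x) ^ 2 ≤ ∑ x ∈ t, f x ^ 2 := by
    rw [← sum_image (f := fun x => f x ^ 2) fun x hx y hy h => hφ hx hy h]
    exact sum_le_sum_of_subset_of_nonneg (image_subset_iff.mpr hφt) fun _ _ _ => sq_nonneg _
  have hcount := sum_sum_le_mul_sum_of_card_filter_le hP hM hg
  calc ∑ x ∈ s, f x ^ 2 ≤ ∑ x ∈ s, (2 * f (φ x) ^ 2 + 2 * c * ∑ p ∈ P x, g p) :=
        sum_le_sum fun x hx => by nlinarith [hpath x hx, sq_nonneg (f x - 2 * f (φ x))]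
    _ = 2 * ∑ x ∈ s, f (φ x) ^ 2 + 2 * c * ∑ x ∈ s, ∑ p ∈ P x, g p := by
        rw [sum_add_distrib, mul_sum, mul_sum]
    _ ≤ 2 * ∑ x ∈ t, f x ^ 2 + 2 * c * M * ∑ p ∈ E, g p := by
        rw [mul_assoc (2 * c)]
        gcongr

theorem card_filter_mem_pathEdges_le {d L : ℕ} (hd : 2 ≤ d) {s : Finset (Fin d → ℤ)}
    {l : (Fin d → ℤ) → List (Fin d → ℤ)} (hhead : ∀ x ∈ s, (l x).head? = some x)
    (hlen : ∀ x ∈ s, (l x).length ≤ L + 1)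
    (hstep : ∀ x ∈ s, (l x).IsChain fun a b => l1Dist a b ≤ 1) (p : (Fin d → ℤ) × (Fin d → ℤ)) :
    #{x ∈ s | p ∈ pathEdges (l x)} ≤ 2 ^ (d - 1) * L ^ d := by
  refine card_le_of_forall_l1Dist_lt hd p.1 _ fun x hx => ?_
  rw [mem_filter] at hx
  have := l1Dist_fst_lt_of_mem_pathEdges (hstep x hx.1) (hhead x hx.1) hx.2
  have := hlen x hx.1
  rw [l1Dist_comm]
  omega

theorem stmt6_general (d L : ℕ) (hd : 2 ≤ d)
    (ν μc : ℝ) (hν : 0 < ν) (hμ : 0 < μc)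
    (V VC B : Finset (Fin d → ℤ))
    (EG EC : Finset ((Fin d → ℤ) × (Fin d → ℤ)))
    (w : (Fin d → ℤ) × (Fin d → ℤ) → ℝ)
    (hECG : EC ⊆ EG)
    (hlattice : ∀ p ∈ EG, (∑ i, (p.1 i - p.2 i).natAbs) = 1)
    (hwpos : ∀ p, 0 < w p)
    (φ : (Fin d → ℤ) → (Fin d → ℤ))
    (hφinj : Set.InjOn φ ↑(B \ VC))
    (hφrange : ∀ x ∈ B \ VC, φ x ∈ VC)
    (hpath : ∀ x ∈ B \ VC, ∃ l : List (Fin d → ℤ),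
      l.head? = some x ∧ l.getLast? = some (φ x) ∧ l.Nodup ∧ l.length ≤ L + 1 ∧
      l.Chain' (fun a b => (a, b) ∈ EG ∧ ν < w (a, b)))
    (hPoincare : ∀ f : (Fin d → ℤ) → ℝ, (∀ x ∉ B, f x = 0) →
      μc * ∑ x ∈ VC, f x ^ 2 ≤ (1 / 2) * ∑ p ∈ EC, w p * (f p.1 - f p.2) ^ 2) :
    ∀ f : (Fin d → ℤ) → ℝ, (∀ x ∉ B, f x = 0) →
      ((2 * (L : ℝ)) ^ (d + 1) / ν + 3 / μc)⁻¹ * ∑ x ∈ V, f x ^ 2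
        ≤ (1 / 2) * ∑ p ∈ EG, w p * (f p.1 - f p.2) ^ 2 := by
  intro f hf
  classical
  choose! l hl using hpath
  set T := ∑ p ∈ EG, w p * (f p.1 - f p.2) ^ 2
  have hg (p) : 0 ≤ w p * (f p.1 - f p.2) ^ 2 := mul_nonneg (hwpos p).le (sq_nonneg _)
  have hC : μc * ∑ x ∈ VC, f x ^ 2 ≤ (1 / 2) * T :=
    (hPoincare f hf).trans (by gcongr; exact sum_le_sum_of_subset_of_nonneg hECG fun p _ _ => hg p)
  have hout : ∑ x ∈ B \ VC, f x ^ 2 ≤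
      2 * ∑ x ∈ VC, f x ^ 2 + 2 * (L / ν) * (2 ^ (d - 1) * L ^ d : ℕ) * T := by
    refine sum_sq_le_of_paths (P := fun x => pathEdges (l x)) hφinj hφrange
      (fun x hx p hp => (rel_of_mem_pathEdges (hl x hx).2.2.2.2 hp).1)
      (fun x hx => ?_) (fun p _ => ?_) (fun p _ => hg p) (by positivity)
    · obtain ⟨hhead, hlast, hnodup, hlen, hchain⟩ := hl x hx
      exact sq_sub_le_mul_sum_pathEdges f w hν hnodup hhead hlast hlen
        fun p hp => (rel_of_mem_pathEdges hchain hp).2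
    · exact card_filter_mem_pathEdges_le hd (fun x hx => (hl x hx).1)
        (fun x hx => (hl x hx).2.2.2.1)
        (fun x hx => (hl x hx).2.2.2.2.imp fun a b hab => (hlattice (a, b) hab.1).le) p
  have hV : ∑ x ∈ V, f x ^ 2 ≤ ∑ x ∈ B \ VC, f x ^ 2 + ∑ x ∈ VC, f x ^ 2 :=
    sum_le_sum_sdiff_add_sum (fun x => sq_nonneg (f x)) fun x hx => by simp [hf x hx]
  have hconst :
      2 * ((L : ℝ) / ν) * ((2 ^ (d - 1) * L ^ d : ℕ) : ℝ) = (2 * L) ^ (d + 1) / ν / 2 := by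
    have h2 : (2 : ℝ) ^ d = 2 ^ (d - 1) * 2 := by rw [← pow_succ, Nat.sub_add_cancel (by omega)]
    push_cast
    rw [mul_pow, pow_succ, h2]
    ring
  have hVC : 3 * ∑ x ∈ VC, f x ^ 2 ≤ 3 / μc * (1 / 2 * T) := by
    rw [div_mul_eq_mul_div, le_div_iff₀ hμ]
    linarith
  rw [hconst] at hout
  rw [inv_mul_le_iff₀ (by positivity), add_mul]
  linarith

/-- Deterministic path/energy comparison (Lemma on path arguments).
Let `G = (V, EG)` be a finite subgraph of the nearest-neighbor lattice `(ℤ^d, 𝔈_d)`,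
`d ≥ 2`, with positive symmetric edge weights `w`, and let `C = (VC, EC)` be a subgraph
of `G`.  Assume the Poincaré-type inequality `E^w_C(f) ≥ μ ∑_{x ∈ VC} f(x)²` for all `f`
supported in `B ⊆ V`, and that there is an injective map `φ : B ∖ VC → VC` together
with, for each `x ∈ B ∖ VC`, a self-avoiding directed path in `G` from `x` to `φ(x)`
of length at most `L ≥ 2` using only edges of weight `> ν`.  Then for every `f`
supported in `B`:
`E^w_G(f) ≥ ((2L)^{d+1}/ν + 3/μ)⁻¹ ∑_{x ∈ V} f(x)²`. -/
theorem stmt6 (d L : ℕ) (hd : 2 ≤ d) (hL : 2 ≤ L)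
    (ν μc : ℝ) (hν : 0 < ν) (hμ : 0 < μc)
    (V VC B : Finset (Fin d → ℤ))
    (EG EC : Finset ((Fin d → ℤ) × (Fin d → ℤ)))
    (w : (Fin d → ℤ) × (Fin d → ℤ) → ℝ)
    (hVC : VC ⊆ V) (hB : B ⊆ V)
    (hECG : EC ⊆ EG)
    (hEGV : ∀ p ∈ EG, p.1 ∈ V ∧ p.2 ∈ V)
    (hECV : ∀ p ∈ EC, p.1 ∈ VC ∧ p.2 ∈ VC)
    (hsymG : ∀ p, p ∈ EG ↔ Prod.swap p ∈ EG)
    (hsymC : ∀ p, p ∈ EC ↔ Prod.swap p ∈ EC)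
    (hlattice : ∀ p ∈ EG, (∑ i, (p.1 i - p.2 i).natAbs) = 1)
    (hwpos : ∀ p, 0 < w p) (hwsym : ∀ p, w (Prod.swap p) = w p)
    (φ : (Fin d → ℤ) → (Fin d → ℤ))
    (hφinj : Set.InjOn φ ↑(B \ VC))
    (hφrange : ∀ x ∈ B \ VC, φ x ∈ VC)
    (hpath : ∀ x ∈ B \ VC, ∃ l : List (Fin d → ℤ),
      l.head? = some x ∧ l.getLast? = some (φ x) ∧ l.Nodup ∧ l.length ≤ L + 1 ∧
      l.Chain' (fun a b => (a, b) ∈ EG ∧ ν < w (a, b)))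
    (hPoincare : ∀ f : (Fin d → ℤ) → ℝ, (∀ x ∉ B, f x = 0) →
      μc * ∑ x ∈ VC, f x ^ 2 ≤ (1 / 2) * ∑ p ∈ EC, w p * (f p.1 - f p.2) ^ 2) :
    ∀ f : (Fin d → ℤ) → ℝ, (∀ x ∉ B, f x = 0) →
      ((2 * (L : ℝ)) ^ (d + 1) / ν + 3 / μc)⁻¹ * ∑ x ∈ V, f x ^ 2
        ≤ (1 / 2) * ∑ p ∈ EG, w p * (f p.1 - f p.2) ^ 2 :=
  stmt6_general d L hd ν μc hν hμ V VC B EG EC w hECG hlattice hwpos φ hφinj hφrange hpath hPoincare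
end

section
/- Eigenvector mass bound near a near-minimal site: Let B_n ⊂ Z^d be a finite box, w positive edge weights, and let ψ be the nonnegative ℓ^2-normalized principal Dirichlet eigenvector of −L_w on B_n with eigenvalue λ, where (L_w f)(x) = Σ_{y∼x} w_{xy}(f(y)−f(x)). Let y, z ∈ B_n with π_z < π_y (π_x = Σ_{u∼x} w_{xu}) and y not adjacent to z. Set m_y = 2·max_{x∼y} ψ(x). Then ψ(y) ≤ m_y / (1 − π_z/π_y). -/
/-! If `ψ(y) (π_y - π_z) > m_y π_y`, replace `ψ(y)` by `m_y` and `ψ(z)` by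
`√(ψ(y)² + ψ(z)² - m_y²)`; this keeps the support and the `ℓ²` norm. Since `y` and `z` are not
adjacent, the two changes touch disjoint sets of edges. An edge at `y` loses at least
`ψ(y) (ψ(y) - m_y)` (because `2 ψ(b) ≤ m_y < ψ(y)`), an edge at `z` gains at most
`ψ(y)² - m_y²` (because `ψ(z)` increases and `ψ ≥ 0`). The total change of energy is at most
`(ψ(y) - m_y) (m_y π_z - ψ(y) (π_y - π_z)) < 0`, contradicting minimality. -/

open Finset Function

theorem Finset.sum_apply_update_of_mem {ι α M : Type*} [DecidableEq ι] [AddCommGroup M]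
    {s : Finset ι} {i : ι} (h : i ∈ s) (g : α → M) (f : ι → α) (b : α) :
    ∑ x ∈ s, g (update f i b x) = ∑ x ∈ s, g (f x) - g (f i) + g b := by
  rw [← add_sum_erase s _ h, ← add_sum_erase s _ h, update_self,
    sum_congr rfl fun j hj => by rw [update_of_ne (ne_of_mem_erase hj)]]
  abel

def latticeGraph (d : ℕ) : SimpleGraph (Fin d → ℤ) where
  Adj x y := ∑ i, (x i - y i).natAbs = 1
  symm := ⟨fun x y h => by simpa only [← Int.natAbs_neg (y _ - _), neg_sub] using h⟩
  loopless := ⟨fun x h => by simp at h⟩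

instance (d : ℕ) : DecidableRel (latticeGraph d).Adj :=
  inferInstanceAs (DecidableRel fun x y : Fin d → ℤ => ∑ i, (x i - y i).natAbs = 1)

namespace SimpleGraph

variable {V : Type*} (G : SimpleGraph V) [DecidableRel G.Adj] (S : Finset V) (w : V → V → ℝ)

def weightedDegree (x : V) : ℝ :=
  ∑ y ∈ S, if G.Adj x y then w x y else 0

noncomputable def dirichletEnergy (f : V → ℝ) : ℝ :=
  1 / 2 * ∑ x ∈ S, ∑ y ∈ S, if G.Adj x y then w x y * (f x - f y) ^ 2 else 0

variable {G S w}

theorem weightedDegree_nonneg (hw : ∀ a b, 0 ≤ w a b) (x : V) : 0 ≤ G.weightedDegree S w x :=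
  sum_nonneg fun y _ => by split_ifs <;> simp [hw]

variable [DecidableEq V]

theorem dirichletEnergy_update_sub (hw : ∀ a b, w a b = w b a) {x : V} (hx : x ∈ S)
    (f : V → ℝ) (t : ℝ) :
    G.dirichletEnergy S w (update f x t) - G.dirichletEnergy S w f =
      ∑ b ∈ S, if G.Adj x b then w x b * ((t - f b) ^ 2 - (f x - f b) ^ 2) else 0 := by
  set L : V → ℝ := fun b => if G.Adj x b then w x b * ((t - f b) ^ 2 - (f x - f b) ^ 2) else 0
  have hpair : ∀ a b,
      ((if G.Adj a b then w a b * (update f x t a - update f x t b) ^ 2 else 0) -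
        if G.Adj a b then w a b * (f a - f b) ^ 2 else 0) =
      (if a = x then L b else 0) + (if b = x then L a else 0) := by
    intro a b
    by_cases hab : G.Adj a b
    · by_cases ha : a = x
      · subst ha; simp [L, hab, hab.ne', mul_sub]
      · by_cases hb : b = x
        · subst hb; simp [L, ha, hab, hab.symm, hw a b]; ring
        · simp [ha, hb]
    · have hba : ¬ G.Adj b a := fun h => hab h.symm
      split_ifs <;> simp_all [L]
  simp only [dirichletEnergy, ← mul_sub, ← sum_sub_distrib, hpair, sum_add_distrib]
  rw [sum_comm]
  simp [sum_ite_eq', hx]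
  ring

theorem dirichletEnergy_update_sub_le (hw : ∀ a b, w a b = w b a) (hw₀ : ∀ a b, 0 ≤ w a b)
    {x : V} (hx : x ∈ S) {f : V → ℝ} {t c : ℝ}
    (hc : ∀ b, G.Adj x b → (t - f b) ^ 2 - (f x - f b) ^ 2 ≤ c) :
    G.dirichletEnergy S w (update f x t) - G.dirichletEnergy S w f ≤
      c * G.weightedDegree S w x := by
  rw [dirichletEnergy_update_sub hw hx, weightedDegree, mul_sum]
  refine sum_le_sum fun b _ => ?_
  split_ifs with hb
  · rw [mul_comm c]; exact mul_le_mul_of_nonneg_left (hc b hb) (hw₀ x b)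
  · simp

theorem mul_weightedDegree_sub_le_of_minimizer (hw : ∀ a b, w a b = w b a)
    (hw₀ : ∀ a b, 0 ≤ w a b) {B : Finset V} {ψ : V → ℝ} (hψ₀ : ∀ x, 0 ≤ ψ x)
    (hψB : ∀ x ∉ B, ψ x = 0)
    (hψnorm : ∑ x ∈ S, ψ x ^ 2 = 1)
    (hmin : ∀ f : V → ℝ, (∀ x ∉ B, f x = 0) → ∑ x ∈ S, f x ^ 2 = 1 →
      G.dirichletEnergy S w ψ ≤ G.dirichletEnergy S w f)
    {y z : V} (hyB : y ∈ B) (hzB : z ∈ B) (hyS : y ∈ S) (hzS : z ∈ S) (hyz : y ≠ z)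
    (hnadj : ¬ G.Adj y z) {m : ℝ} (hm₀ : 0 ≤ m) (hm : ∀ b, G.Adj y b → 2 * ψ b ≤ m) :
    ψ y * (G.weightedDegree S w y - G.weightedDegree S w z) ≤ m * G.weightedDegree S w y := by
  set πy := G.weightedDegree S w y
  set πz := G.weightedDegree S w z
  have hπy := weightedDegree_nonneg (G := G) (S := S) hw₀ y
  have hπz := weightedDegree_nonneg (G := G) (S := S) hw₀ z
  by_contra! hlt
  have hmy : m < ψ y := by
    by_contra! h
    nlinarith [mul_nonneg (hψ₀ y) hπz, mul_le_mul_of_nonneg_right h hπy]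
  set s := √(ψ y ^ 2 + ψ z ^ 2 - m ^ 2)
  have hs : s ^ 2 = ψ y ^ 2 + ψ z ^ 2 - m ^ 2 := Real.sq_sqrt (by nlinarith)
  have hzs : ψ z ≤ s := Real.le_sqrt_of_sq_le (by nlinarith)
  set ψ₁ := update ψ y m
  have hψ₁ : ∀ b, G.Adj z b → ψ₁ b = ψ b := fun b hb =>
    update_of_ne (by rintro rfl; exact hnadj hb.symm) _ _
  have hψ₁z : ψ₁ z = ψ z := update_of_ne hyz.symm _ _
  set φ := update ψ₁ z s
  have hφB : ∀ x ∉ B, φ x = 0 := fun x hx => by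
    simp only [φ, ψ₁, update_of_ne (ne_of_mem_of_not_mem hzB hx).symm,
      update_of_ne (ne_of_mem_of_not_mem hyB hx).symm, hψB x hx]
  have hφnorm : ∑ x ∈ S, φ x ^ 2 = 1 := by
    rw [sum_apply_update_of_mem hzS (· ^ 2), sum_apply_update_of_mem hyS (· ^ 2), hψ₁z]
    linarith
  have hstep₁ : G.dirichletEnergy S w ψ₁ - G.dirichletEnergy S w ψ ≤ ψ y * (m - ψ y) * πy :=
    dirichletEnergy_update_sub_le hw hw₀ hyS fun b hb => by nlinarith [hm b hb]
  have hstep₂ : G.dirichletEnergy S w φ - G.dirichletEnergy S w ψ₁ ≤ (ψ y ^ 2 - m ^ 2) * πz :=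
    dirichletEnergy_update_sub_le hw hw₀ hzS fun b hb => by
      rw [hψ₁ b hb, hψ₁z]
      nlinarith [hψ₀ b]
  have hdecrease : ψ y * (m - ψ y) * πy + (ψ y ^ 2 - m ^ 2) * πz < 0 := by
    nlinarith [mul_nonneg hm₀ hπz]
  linarith [hmin φ hφB hφnorm]

end SimpleGraph

theorem stmt8_general (d n : ℕ)
    (w : (Fin d → ℤ) → (Fin d → ℤ) → ℝ)
    (hwpos : ∀ x y, 0 < w x y) (hwsym : ∀ x y, w x y = w y x)
    (Bn Bnp : Finset (Fin d → ℤ))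
    (hBn : Bn = Fintype.piFinset fun _ => Finset.Icc (-(n : ℤ)) n)
    (hBnp : Bnp = Fintype.piFinset fun _ => Finset.Icc (-(n : ℤ) - 1) ((n : ℤ) + 1))
    (π : (Fin d → ℤ) → ℝ)
    (hπ : ∀ x, π x = ∑ y ∈ Bnp, if (∑ i, (x i - y i).natAbs) = 1 then w x y else 0)
    (energy : ((Fin d → ℤ) → ℝ) → ℝ)
    (henergy : ∀ f, energy f = (1 / 2) * ∑ x ∈ Bnp, ∑ y ∈ Bnp,
        if (∑ i, (x i - y i).natAbs) = 1 then w x y * (f x - f y) ^ 2 else 0)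
    (ψ : (Fin d → ℤ) → ℝ) (lam : ℝ)
    (hψ0 : ∀ x, 0 ≤ ψ x) (hψsupp : ∀ x ∉ Bn, ψ x = 0)
    (hψnorm : ∑ x ∈ Bnp, ψ x ^ 2 = 1)
    (hlam : energy ψ = lam)
    (hmin : ∀ f : (Fin d → ℤ) → ℝ, (∀ x ∉ Bn, f x = 0) →
        (∑ x ∈ Bnp, f x ^ 2 = 1) → lam ≤ energy f)
    (y z : Fin d → ℤ) (hy : y ∈ Bn) (hz : z ∈ Bn)
    (hπlt : π z < π y)
    (hnadj : (∑ i, (y i - z i).natAbs) ≠ 1)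
    (my : ℝ)
    (hmy : my = 2 * sSup {r | ∃ x, (∑ i, (x i - y i).natAbs) = 1 ∧ r = ψ x}) :
    ψ y ≤ my / (1 - π z / π y) := by
  have hdeg : ∀ x, π x = (latticeGraph d).weightedDegree Bnp w x := hπ
  have hE : ∀ f, energy f = (latticeGraph d).dirichletEnergy Bnp w f := henergy
  have hw₀ : ∀ a b, 0 ≤ w a b := fun a b => (hwpos a b).le
  have hBS : Bn ⊆ Bnp := by
    rw [hBn, hBnp]
    exact Fintype.piFinset_subset _ _ fun _ => Icc_subset_Icc (by omega) (by omega)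
  have hbdd : BddAbove (Set.range ψ) := by
    refine ((Bn.finite_toSet.image ψ).insert 0).bddAbove.mono ?_
    rintro _ ⟨x, rfl⟩
    by_cases hx : x ∈ Bn
    · exact Or.inr ⟨x, hx, rfl⟩
    · exact Or.inl (hψsupp x hx)
  set N := {r | ∃ x, (∑ i, (x i - y i).natAbs) = 1 ∧ r = ψ x}
  have hN : N ⊆ Set.range ψ := by rintro _ ⟨x, -, rfl⟩; exact ⟨x, rfl⟩
  have hm : ∀ b, (latticeGraph d).Adj y b → 2 * ψ b ≤ my := fun b hb => by
    linarith [le_csSup (hbdd.mono hN) ⟨b, hb.symm, rfl⟩]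
  have hm₀ : 0 ≤ my := hmy ▸ mul_nonneg zero_le_two
    (Real.sSup_nonneg (by rintro _ ⟨x, -, rfl⟩; exact hψ0 x))
  have key := SimpleGraph.mul_weightedDegree_sub_le_of_minimizer hwsym hw₀ hψ0 hψsupp hψnorm
    (fun f hf hfn => by rw [← hE, ← hE, hlam]; exact hmin f hf hfn) hy hz (hBS hy) (hBS hz)
    (by rintro rfl; exact hπlt.false) hnadj hm₀ hm
  rw [← hdeg, ← hdeg] at key
  have hπy : 0 < π y := ((hdeg z).symm ▸ SimpleGraph.weightedDegree_nonneg hw₀ z).trans_lt hπlt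
  rw [le_div_iff₀ (by linarith [(div_lt_one hπy).2 hπlt])]
  calc ψ y * (1 - π z / π y) = ψ y * (π y - π z) / π y := by field_simp
    _ ≤ my := div_le_of_le_mul₀ hπy.le hm₀ key

/-- Eigenvector mass bound near a near-minimal site.  Let `ψ` be the nonnegative
`ℓ²`-normalized principal Dirichlet eigenvector of `−L_w` on the box `B_n ⊂ ℤ^d`
(characterized as the minimizer of the Dirichlet energy among normalized functions
supported in `B_n`, with eigenvalue `λ = E^w(ψ)`), let `y, z ∈ B_n` with `π_z < π_y`
and `y` not adjacent to `z`, and set `m_y = 2 max_{x ∼ y} ψ(x)`.  Then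
`ψ(y) ≤ m_y / (1 − π_z/π_y)`. -/
theorem stmt8 (d n : ℕ) (hd : 0 < d)
    (w : (Fin d → ℤ) → (Fin d → ℤ) → ℝ)
    (hwpos : ∀ x y, 0 < w x y) (hwsym : ∀ x y, w x y = w y x)
    (Bn Bnp : Finset (Fin d → ℤ))
    (hBn : Bn = Fintype.piFinset fun _ => Finset.Icc (-(n : ℤ)) n)
    (hBnp : Bnp = Fintype.piFinset fun _ => Finset.Icc (-(n : ℤ) - 1) ((n : ℤ) + 1))
    (π : (Fin d → ℤ) → ℝ)
    (hπ : ∀ x, π x = ∑ y ∈ Bnp, if (∑ i, (x i - y i).natAbs) = 1 then w x y else 0)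
    (energy : ((Fin d → ℤ) → ℝ) → ℝ)
    (henergy : ∀ f, energy f = (1 / 2) * ∑ x ∈ Bnp, ∑ y ∈ Bnp,
        if (∑ i, (x i - y i).natAbs) = 1 then w x y * (f x - f y) ^ 2 else 0)
    (ψ : (Fin d → ℤ) → ℝ) (lam : ℝ)
    (hψ0 : ∀ x, 0 ≤ ψ x) (hψsupp : ∀ x ∉ Bn, ψ x = 0)
    (hψnorm : ∑ x ∈ Bnp, ψ x ^ 2 = 1)
    (hlam : energy ψ = lam)
    (hmin : ∀ f : (Fin d → ℤ) → ℝ, (∀ x ∉ Bn, f x = 0) →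
        (∑ x ∈ Bnp, f x ^ 2 = 1) → lam ≤ energy f)
    (y z : Fin d → ℤ) (hy : y ∈ Bn) (hz : z ∈ Bn)
    (hπlt : π z < π y)
    (hnadj : (∑ i, (y i - z i).natAbs) ≠ 1)
    (my : ℝ)
    (hmy : my = 2 * sSup {r | ∃ x, (∑ i, (x i - y i).natAbs) = 1 ∧ r = ψ x}) :
    ψ y ≤ my / (1 - π z / π y) :=
  stmt8_general d n w hwpos hwsym Bn Bnp hBn hBnp π hπ energy henergy ψ lam hψ0 hψsupp hψnorm hlam
    hmin y z hy hz hπlt hnadj my hmy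
end

section
/- Second Borel–Cantelli-type divergence: If g: (0,∞) → (0,∞) decreases monotonically to zero and ∫_0^∞ u^{d−1} P[w ≤ g(u)]^m du = ∞, where m = |𝔄| for a finite edge set 𝔄 ⊆ 𝔈(B_b), then almost surely, for infinitely many n there exists z ∈ B_{n+b} such that every edge e ∈ 𝔄 + z has conductance w_e ≤ g(n). -/
open MeasureTheory ProbabilityTheory Filter Function
open scoped ENNReal

/-! Consider the cubes of side `2b + 1` centred at the points `(2b + 1) v`, `v ∈ ℕ^d`, and the
event that every edge of the translate of `𝔄` into the cube of `v` has conductance at most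
`g((2b + 1) max v)`. Since `𝔄 ⊆ 𝔈(B_b)`, distinct cubes use disjoint sets of edges, so these events
are independent, with probabilities `P[w ≤ g((2b + 1) max v)]^m`. At least `(k + 1)^(d - 1)` of the
`v` have `max v = k`, and cutting the integral at the points `(2b + 1) k` shows that these
probabilities have infinite sum. By the second Borel–Cantelli lemma infinitely many of the events
occur, and each gives `n = (2b + 1) max v` and `z = (2b + 1) v ∈ B_n`. -/

theorem iIndepSet_biInter_preimage {Ω ι κ β : Type*} [MeasurableSpace Ω] {μ : Measure Ω}
    [MeasurableSpace β] {w : κ → Ω → β} (hw : ∀ k, Measurable (w k))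
    (hindep : iIndepFun w μ) {A : ι → Finset κ} (hA : Pairwise (Disjoint on A))
    {T : κ → Set β} (hT : ∀ k, MeasurableSet (T k)) :
    iIndepSet (fun i => ⋂ k ∈ A i, w k ⁻¹' T k) μ := by
  classical
  rw [iIndepSet_iff_meas_biInter fun i => Finset.measurableSet_biInter _ fun k _ => hw k (hT k)]
  intro K
  have hK : (K : Set ι).PairwiseDisjoint A := hA.set_pairwise _
  rw [← Finset.set_biInter_biUnion, hindep.measure_inter_preimage_eq_mul _ fun k _ => hT k,
    Finset.prod_biUnion hK]
  exact Finset.prod_congr rfl fun i _ =>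
    (hindep.measure_inter_preimage_eq_mul _ fun k _ => hT k).symm

theorem ae_frequently_cofinite_of_iIndepSet {Ω ι : Type*} [MeasurableSpace Ω] {μ : Measure Ω}
    [IsProbabilityMeasure μ] [Countable ι] {s : ι → Set Ω} (hs : ∀ i, MeasurableSet (s i))
    (hindep : iIndepSet s μ) (hsum : ∑' i, μ (s i) = ∞) :
    ∀ᵐ ω ∂μ, ∃ᶠ i in cofinite, ω ∈ s i := by
  have : Infinite ι := by
    by_contra hfin
    have : Fintype ι := @Fintype.ofFinite ι (not_infinite_iff_finite.mp hfin)
    rw [tsum_fintype] at hsum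
    exact ENNReal.sum_ne_top.mpr (fun i _ => measure_ne_top μ (s i)) hsum
  obtain ⟨ρ⟩ := nonempty_equiv_of_countable (α := ℕ) (β := ι)
  have hae : ∀ᵐ ω ∂μ, ω ∈ limsup (s ∘ ρ) atTop := by
    have hmeas : MeasurableSet (limsup (s ∘ ρ) atTop) :=
      MeasurableSet.measurableSet_limsup fun n => hs (ρ n)
    rw [ae_mem_iff_measure_eq hmeas.nullMeasurableSet, measure_univ]
    refine measure_limsup_eq_one (fun n => hs (ρ n)) (hindep.precomp ρ.injective) ?_
    exact (ρ.tsum_eq fun i => μ (s i)).trans hsum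
  filter_upwards [hae] with ω hω
  rw [mem_limsup_iff_frequently_mem, ← Nat.cofinite_eq_atTop] at hω
  exact ρ.injective.tendsto_cofinite.frequently_map _ (fun _ h => h) hω

theorem lintegral_Ioi_pow_mul_le_tsum {f : ℝ → ℝ≥0∞} (hf : Antitone f) {c : ℝ} (hc : 0 < c)
    (p : ℕ) :
    ∫⁻ u in Set.Ioi 0, ENNReal.ofReal (u ^ p) * f u
      ≤ ENNReal.ofReal (c ^ (p + 1)) * ∑' k : ℕ, ((k : ℝ≥0∞) + 1) ^ p * f (c * k) := by
  have hcover : Set.Ioi (0 : ℝ) ⊆ ⋃ k : ℕ, Set.Ico (c * k) (c * (k + 1)) := by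
    intro u hu
    have hu' : 0 ≤ u / c := div_nonneg (le_of_lt hu) hc.le
    refine Set.mem_iUnion.mpr ⟨⌊u / c⌋₊, ?_, ?_⟩
    · rw [mul_comm, ← le_div_iff₀ hc]
      exact Nat.floor_le hu'
    · rw [mul_comm, ← div_lt_iff₀ hc]
      exact Nat.lt_floor_add_one _
  have hpiece : ∀ k : ℕ, ∫⁻ u in Set.Ico (c * k) (c * (k + 1)), ENNReal.ofReal (u ^ p) * f u
      ≤ ENNReal.ofReal (c ^ (p + 1)) * (((k : ℝ≥0∞) + 1) ^ p * f (c * k)) := by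
    intro k
    calc _ ≤ ∫⁻ _ in Set.Ico (c * k) (c * (k + 1)),
          ENNReal.ofReal ((c * (k + 1)) ^ p) * f (c * k) := by
          refine setLIntegral_mono measurable_const fun u hu => mul_le_mul' ?_ (hf hu.1)
          exact ENNReal.ofReal_le_ofReal
            (pow_le_pow_left₀ ((by positivity : (0:ℝ) ≤ c * k).trans hu.1) hu.2.le _)
      _ = _ := by
          rw [setLIntegral_const, Real.volume_Ico, show c * (k + 1) - c * k = c by ring,
            ← ENNReal.ofReal_natCast, ← ENNReal.ofReal_one,
            ← ENNReal.ofReal_add (by positivity) zero_le_one, ← ENNReal.ofReal_pow (by positivity),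
            mul_pow, pow_succ,
            ENNReal.ofReal_mul (by positivity), ENNReal.ofReal_mul (by positivity)]
          ring
  calc _ ≤ ∫⁻ u in ⋃ k : ℕ, Set.Ico (c * k) (c * (k + 1)), ENNReal.ofReal (u ^ p) * f u :=
        lintegral_mono_set hcover
    _ ≤ ∑' k : ℕ, ∫⁻ u in Set.Ico (c * k) (c * (k + 1)), ENNReal.ofReal (u ^ p) * f u :=
        lintegral_iUnion_le _ _
    _ ≤ _ := (ENNReal.tsum_le_tsum hpiece).trans_eq ENNReal.tsum_mul_left

theorem tsum_succ_pow_mul_le_tsum_sup {ι : Type*} [Fintype ι] [Nonempty ι] (φ : ℕ → ℝ≥0∞) :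
    ∑' k : ℕ, ((k : ℝ≥0∞) + 1) ^ (Fintype.card ι - 1) * φ k
      ≤ ∑' v : ι → ℕ, φ (Finset.univ.sup v) := by
  classical
  obtain ⟨i₀⟩ := ‹Nonempty ι›
  let M : (ι → ℕ) → ℕ := fun v => Finset.univ.sup v
  let S : ℕ → Finset (ι → ℕ) := fun k =>
    Fintype.piFinset fun i => if i = i₀ then {k} else Finset.range (k + 1)
  have hS_card : ∀ k, (S k).card = (k + 1) ^ (Fintype.card ι - 1) := by
    intro k
    simp [S, Fintype.card_piFinset, apply_ite Finset.card, Finset.prod_ite, Finset.filter_ne']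
  have hS_sup : ∀ k, ∀ v ∈ S k, M v = k := by
    intro k v hv
    have hv' := Fintype.mem_piFinset.mp hv
    refine le_antisymm (Finset.sup_le fun i _ => ?_) ?_
    · have := hv' i
      split_ifs at this <;> simp_all
    · have := hv' i₀
      rw [if_pos rfl, Finset.mem_singleton] at this
      exact this ▸ Finset.le_sup (Finset.mem_univ i₀)
  calc _ = ∑' k : ℕ, ∑ v ∈ S k, φ (M v) := by
        refine tsum_congr fun k => ?_
        rw [Finset.sum_congr rfl fun v hv => congrArg φ (hS_sup k v hv), Finset.sum_const,
          hS_card, nsmul_eq_mul]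
        push_cast
        rfl
    _ ≤ ∑' k : ℕ, ∑' v : M ⁻¹' {k}, φ (M v) :=
        ENNReal.tsum_le_tsum fun k => (Finset.tsum_subtype' (S k) _).symm.le.trans
          (ENNReal.tsum_mono_subtype (φ ∘ M) fun v hv => hS_sup k v hv)
    _ = _ := ENNReal.tsum_fiberwise (φ ∘ M) M

theorem tendsto_sup_cofinite_atTop {ι : Type*} [Fintype ι] :
    Tendsto (fun v : ι → ℕ => Finset.univ.sup v) cofinite atTop := by
  refine tendsto_atTop.mpr fun N => eventually_cofinite.mpr ?_
  refine (Set.Finite.pi fun _ => Set.finite_Iio N).subset fun v hv i _ => ?_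
  exact lt_of_le_of_lt (Finset.le_sup (Finset.mem_univ i)) (not_le.mp hv)

section Cells

variable {ι : Type*} (b : ℕ)

def cellCenter (v : ι → ℕ) : ι → ℤ := fun i => (2 * b + 1 : ℤ) * v i

def cellIndex (x : ι → ℤ) : ι → ℕ := fun i => ((x i + b) / (2 * b + 1)).toNat

def cellRadius [Fintype ι] (v : ι → ℕ) : ℕ := (2 * b + 1) * Finset.univ.sup v

variable {b}

theorem cellIndex_add_cellCenter {x : ι → ℤ} (hx : ∀ i, |x i| ≤ b) (v : ι → ℕ) :
    cellIndex b (x + cellCenter b v) = v := by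
  funext i
  have hxi := abs_le.mp (hx i)
  simp only [cellIndex, cellCenter, Pi.add_apply]
  rw [show x i + (2 * b + 1) * v i + b = x i + b + v i * (2 * b + 1) by ring,
    Int.add_mul_ediv_right _ _ (by omega), Int.ediv_eq_zero_of_lt (by omega) (by omega),
    zero_add, Int.toNat_natCast]

theorem pairwise_disjoint_image_add_cellCenter {κ : Type*} [DecidableEq ((ι → ℤ) × κ)]
    {𝔄 : Finset ((ι → ℤ) × κ)} (h𝔄 : ∀ e ∈ 𝔄, ∀ i, |e.1 i| ≤ b) :
    Pairwise (Disjoint on fun v : ι → ℕ => 𝔄.image (Prod.map (· + cellCenter b v) id)) := by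
  intro v v' hne
  refine Finset.disjoint_left.mpr fun f hf hf' => hne ?_
  obtain ⟨e, he, rfl⟩ := Finset.mem_image.mp hf
  obtain ⟨e', he', heq⟩ := Finset.mem_image.mp hf'
  have := congrArg (cellIndex b ∘ Prod.fst) heq
  simp only [comp_apply, Prod.map_fst, cellIndex_add_cellCenter (h𝔄 _ he),
    cellIndex_add_cellCenter (h𝔄 _ he')] at this
  exact this.symm

theorem abs_cellCenter_le [Fintype ι] (v : ι → ℕ) (i : ι) :
    |cellCenter b v i| ≤ cellRadius b v := by
  have hvi : (v i : ℤ) ≤ Finset.univ.sup v := by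
    exact_mod_cast Finset.le_sup (f := v) (Finset.mem_univ i)
  rw [cellCenter, cellRadius, abs_of_nonneg (by positivity)]
  push_cast
  gcongr

theorem tendsto_cellRadius_cofinite_atTop [Fintype ι] :
    Tendsto (cellRadius (ι := ι) b) cofinite atTop :=
  tendsto_sup_cofinite_atTop.const_mul_atTop' (Nat.succ_pos _)

theorem tsum_cellRadius_eq_top [Fintype ι] [Nonempty ι] {ψ : ℝ → ℝ≥0∞} (hψ : Antitone ψ)
    (hdiv : ∫⁻ u in Set.Ioi 0, ENNReal.ofReal (u ^ (Fintype.card ι - 1)) * ψ u = ⊤) :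
    ∑' v : ι → ℕ, ψ (cellRadius b v) = ⊤ := by
  have htop : ⊤ ≤ ENNReal.ofReal ((2 * b + 1 : ℝ) ^ (Fintype.card ι - 1 + 1)) *
      ∑' v : ι → ℕ, ψ (cellRadius b v) :=
    calc ⊤ = _ := hdiv.symm
      _ ≤ _ := lintegral_Ioi_pow_mul_le_tsum hψ (c := 2 * b + 1) (by positivity) _
      _ ≤ _ := by
        unfold cellRadius
        push_cast
        gcongr
        exact tsum_succ_pow_mul_le_tsum_sup fun k => ψ ((2 * b + 1) * k)
  by_contra hne
  exact ENNReal.mul_ne_top ENNReal.ofReal_ne_top hne (top_le_iff.mp htop)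

end Cells

section CellEvents

variable {Ω ι κ : Type*} [Fintype ι] [DecidableEq κ]
  {w : (ι → ℤ) × κ → Ω → ℝ} {g : ℝ → ℝ} {b : ℕ} {𝔄 : Finset ((ι → ℤ) × κ)}

variable (w g b 𝔄) in
/-- The threshold is read off the edge through `cellIndex` instead of being attached to `v`, so
that the cell events have the shape required by `iIndepSet_biInter_preimage`. -/
def cellEvent (v : ι → ℕ) : Set Ω :=
  ⋂ f ∈ 𝔄.image (Prod.map (· + cellCenter b v) id),
    w f ⁻¹' Set.Iic (g (cellRadius b (cellIndex b f.1)))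

theorem cellEvent_eq (h𝔄 : ∀ e ∈ 𝔄, ∀ i, |e.1 i| ≤ b) (v : ι → ℕ) :
    cellEvent w g b 𝔄 v =
      ⋂ e ∈ 𝔄, w (e.1 + cellCenter b v, e.2) ⁻¹' Set.Iic (g (cellRadius b v)) := by
  rw [cellEvent, Finset.set_biInter_finset_image]
  refine Set.iInter₂_congr fun e he => ?_
  rw [Prod.map_fst, cellIndex_add_cellCenter (h𝔄 e he)]
  rfl

variable [MeasurableSpace Ω] {μ : Measure Ω}

theorem measurableSet_cellEvent (hw : ∀ e, Measurable (w e)) (v : ι → ℕ) :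
    MeasurableSet (cellEvent w g b 𝔄 v) :=
  Finset.measurableSet_biInter _ fun f _ => hw f measurableSet_Iic

theorem iIndepSet_cellEvent (hw : ∀ e, Measurable (w e)) (hindep : iIndepFun w μ)
    (h𝔄 : ∀ e ∈ 𝔄, ∀ i, |e.1 i| ≤ b) :
    iIndepSet (cellEvent w g b 𝔄) μ :=
  iIndepSet_biInter_preimage hw hindep (pairwise_disjoint_image_add_cellCenter h𝔄)
    fun _ => measurableSet_Iic

theorem measure_cellEvent (hindep : iIndepFun w μ) {e₀ : (ι → ℤ) × κ}
    (hident : ∀ e, IdentDistrib (w e) (w e₀) μ μ) (h𝔄 : ∀ e ∈ 𝔄, ∀ i, |e.1 i| ≤ b)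
    (v : ι → ℕ) :
    μ (cellEvent w g b 𝔄 v) = μ {ω | w e₀ ω ≤ g (cellRadius b v)} ^ 𝔄.card := by
  rw [cellEvent, hindep.measure_inter_preimage_eq_mul _ fun _ _ => measurableSet_Iic,
    Finset.prod_image ((add_left_injective _).prodMap injective_id).injOn]
  refine (Finset.prod_congr rfl fun e he => ?_).trans (Finset.prod_const _)
  rw [Prod.map_fst, cellIndex_add_cellCenter (h𝔄 e he)]
  exact (hident _).measure_mem_eq measurableSet_Iic

end CellEvents

/-- Second Borel–Cantelli-type divergence (Lemma 2.1, divergent case).  Conductances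
`(w_e)` are i.i.d., indexed by the edges `(x, i)` of `ℤ^d` (site plus positive axis
direction), `d ≥ 2`.  If `g : (0,∞) → (0,∞)` decreases monotonically to zero and
`∫_0^∞ u^{d−1} P[w ≤ g(u)]^m du = ∞` with `m = |𝔄|` for a finite edge set
`𝔄 ⊆ 𝔈(B_b)`, then almost surely, for infinitely many `n` there exists `z ∈ B_{n+b}`
such that every edge `e ∈ 𝔄 + z` has conductance `w_e ≤ g(n)`. -/
theorem stmt12 {Ω : Type*} [MeasurableSpace Ω] (μ : Measure Ω) [IsProbabilityMeasure μ]
    (d b : ℕ) (hd : 2 ≤ d)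
    (w : ((Fin d → ℤ) × Fin d) → Ω → ℝ)
    (hmeas : ∀ e, Measurable (w e))
    (hindep : iIndepFun w μ)
    (hident : ∀ e e', IdentDistrib (w e) (w e') μ μ)
    (g : ℝ → ℝ) (hganti : Antitone g)
    (𝔄 : Finset ((Fin d → ℤ) × Fin d))
    (h𝔄 : ∀ e ∈ 𝔄, ∀ i, |e.1 i| ≤ (b : ℤ))
    (F : ℝ → ℝ)
    (hF : ∀ u, F u = (μ {ω | w ((fun _ => 0), ⟨0, by omega⟩) ω ≤ u}).toReal)
    (hdiv : ∫⁻ u in Set.Ioi (0 : ℝ),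
        ENNReal.ofReal (u ^ (d - 1) * F (g u) ^ 𝔄.card) = ⊤) :
    μ {ω | ∃ᶠ n : ℕ in atTop, ∃ z : Fin d → ℤ, (∀ i, |z i| ≤ (n : ℤ) + b) ∧
        ∀ e ∈ 𝔄, w (e.1 + z, e.2) ω ≤ g n} = 1 := by
  have : Nonempty (Fin d) := ⟨⟨0, by omega⟩⟩
  set e₀ : (Fin d → ℤ) × Fin d := ((fun _ => 0), ⟨0, by omega⟩)
  set ψ : ℝ → ℝ≥0∞ := fun u => μ {ω | w e₀ ω ≤ g u} ^ 𝔄.card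
  have hψ : Antitone ψ := fun u u' huu' =>
    pow_le_pow_left' (measure_mono fun ω hω => le_trans hω (hganti huu')) _
  have hψ_div :
      ∫⁻ u in Set.Ioi 0, ENNReal.ofReal (u ^ (Fintype.card (Fin d) - 1)) * ψ u = ⊤ := by
    rw [Fintype.card_fin, ← hdiv]
    refine lintegral_congr fun u => ?_
    rw [ENNReal.ofReal_mul' (by rw [hF]; positivity), hF,
      ENNReal.ofReal_pow ENNReal.toReal_nonneg, ENNReal.ofReal_toReal (measure_ne_top _ _)]
  have hsum : ∑' v, μ (cellEvent w g b 𝔄 v) = ⊤ := by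
    simp_rw [measure_cellEvent hindep (fun e => hident e e₀) h𝔄]
    exact tsum_cellRadius_eq_top hψ hψ_div
  have hfreq := ae_frequently_cofinite_of_iIndepSet (measurableSet_cellEvent hmeas)
    (iIndepSet_cellEvent hmeas hindep h𝔄) hsum
  refine le_antisymm prob_le_one (measure_univ.symm.trans_le (measure_mono_ae ?_))
  filter_upwards [hfreq] with ω hω _
  refine tendsto_cellRadius_cofinite_atTop.frequently_map (cellRadius b) (fun v hv => ?_) hω
  rw [cellEvent_eq h𝔄] at hv
  refine ⟨cellCenter b v, fun i => ?_, fun e he => Set.mem_iInter₂.mp hv e he⟩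
  exact (abs_cellCenter_le v i).trans (le_add_of_nonneg_right (Int.natCast_nonneg b))
end

section
/- Calculus lemma behind Corollary 3.3: Let d ≥ 2, m, κ ∈ ℕ, and let h: (0,∞) → [0,1] be a decreasing function such that u^d h(u)^m is bounded. Then for every ε ∈ [0, κ/(m+κ)), the integral ∫_0^∞ v^{d−1} h(v^{1−ε})^{m+κ} dv is finite. -/
/-!
On `(0, 1]` the integrand is at most `1`. For `v > 1` put `u = v^{1-ε}` and `q = (m + κ)/m`;
the bound `h(u)^m ≤ M u^{-d}` raised to the power `q` gives
`v^{d-1} h(u)^{m+κ} ≤ M^q v^{d - 1 - (1-ε) d q}`, and the exponent is `< -1` exactly when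
`(1 - ε)(m + κ) > m`, i.e. `ε < κ/(m + κ)`.
-/

open MeasureTheory Set

lemma pow_add_le_rpow_of_rpow_mul_pow_le {x y M s : ℝ} {m κ : ℕ} (hm : 0 < m) (hx : 0 ≤ x)
    (hy : 0 < y) (hxy : y ^ s * x ^ m ≤ M) :
    x ^ (m + κ) ≤ M ^ ((m + κ : ℝ) / m) * y ^ (-(s * ((m + κ : ℝ) / m))) := by
  have hm' : (m : ℝ) ≠ 0 := by exact_mod_cast hm.ne'
  have hys : 0 < y ^ s := Real.rpow_pos_of_pos hy s
  have hM : 0 ≤ M := (mul_nonneg hys.le (pow_nonneg hx m)).trans hxy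
  have hpow : x ^ m ≤ M * y ^ (-s) := by
    rw [Real.rpow_neg hy.le, ← div_eq_mul_inv, le_div_iff₀ hys, mul_comm]
    exact hxy
  calc x ^ (m + κ) = (x ^ m) ^ ((m + κ : ℝ) / m) := by
        rw [← Real.rpow_natCast x m, ← Real.rpow_mul hx, mul_div_cancel₀ _ hm',
          ← Real.rpow_natCast]
        push_cast
        rfl
    _ ≤ (M * y ^ (-s)) ^ ((m + κ : ℝ) / m) :=
        Real.rpow_le_rpow (pow_nonneg hx m) hpow (by positivity)
    _ = M ^ ((m + κ : ℝ) / m) * y ^ (-(s * ((m + κ : ℝ) / m))) := by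
        rw [Real.mul_rpow hM (Real.rpow_nonneg hy.le _), ← Real.rpow_mul hy.le, neg_mul]

lemma lintegral_Ioi_zero_lt_top_of_le_rpow {f : ℝ → ℝ} {B C a : ℝ} (ha : a < -1)
    (hsmall : ∀ v ∈ Ioc (0 : ℝ) 1, f v ≤ B) (hlarge : ∀ v ∈ Ioi (1 : ℝ), f v ≤ C * v ^ a) :
    ∫⁻ v in Ioi 0, ENNReal.ofReal (f v) < ⊤ := by
  rw [← Ioc_union_Ioi_eq_Ioi zero_le_one,
    lintegral_union measurableSet_Ioi (Ioc_disjoint_Ioi le_rfl)]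
  have hint : IntegrableOn (fun v : ℝ => C * v ^ a) (Ioi 1) :=
    (integrableOn_Ioi_rpow_of_lt ha one_pos).const_mul C
  refine ENNReal.add_lt_top.mpr ⟨?_, ?_⟩
  · calc ∫⁻ v in Ioc 0 1, ENNReal.ofReal (f v)
          ≤ ∫⁻ _ in Ioc (0 : ℝ) 1, ENNReal.ofReal B :=
            setLIntegral_mono measurable_const fun v hv => ENNReal.ofReal_le_ofReal (hsmall v hv)
      _ < ⊤ := by simp
  · calc ∫⁻ v in Ioi 1, ENNReal.ofReal (f v)
          ≤ ∫⁻ v in Ioi 1, ENNReal.ofReal (C * v ^ a) :=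
            setLIntegral_mono_ae (ENNReal.measurable_ofReal.comp_aemeasurable hint.aemeasurable)
              (ae_of_all _ fun v hv => ENNReal.ofReal_le_ofReal (hlarge v hv))
      _ < ⊤ := hint.lintegral_lt_top

lemma decay_exponent_lt_neg_one {d m κ : ℕ} {ε : ℝ} (hd : 0 < d) (hm : 0 < m)
    (hε : ε < (κ : ℝ) / (m + κ)) :
    (d : ℝ) - 1 - (1 - ε) * d * ((m + κ : ℝ) / m) < -1 := by
  have hm' : (0 : ℝ) < m := by exact_mod_cast hm
  have hd' : (0 : ℝ) < d := by exact_mod_cast hd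
  have hεκ : ε * (m + κ) < κ := (lt_div_iff₀ (by positivity)).mp hε
  have hq : 1 < (1 - ε) * ((m + κ : ℝ) / m) := by
    rw [← mul_div_assoc, one_lt_div hm']
    linarith
  nlinarith

theorem stmt14_general (d m κ : ℕ) (hd : 2 ≤ d) (hm : 0 < m)
    (h : ℝ → ℝ)
    (hrange : ∀ u : ℝ, 0 < u → h u ∈ Set.Icc (0 : ℝ) 1)
    (M : ℝ) (hM : ∀ u : ℝ, 0 < u → u ^ d * h u ^ m ≤ M) :
    ∀ ε : ℝ, 0 ≤ ε → ε < (κ : ℝ) / ((m : ℝ) + κ) →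
      ∫⁻ v in Set.Ioi (0 : ℝ),
        ENNReal.ofReal (v ^ (d - 1) * h (v ^ ((1 : ℝ) - ε)) ^ (m + κ)) < ⊤ := by
  intro ε _ hε
  set q : ℝ := (m + κ : ℝ) / m
  refine lintegral_Ioi_zero_lt_top_of_le_rpow (B := 1) (C := M ^ q)
    (decay_exponent_lt_neg_one (d := d) (by omega) hm hε) (fun v hv => ?_) (fun v hv => ?_)
  · obtain ⟨h₀, h₁⟩ := hrange _ (Real.rpow_pos_of_pos hv.1 (1 - ε))
    exact mul_le_one₀ (pow_le_one₀ hv.1.le hv.2) (pow_nonneg h₀ _) (pow_le_one₀ h₀ h₁)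
  · have hv₀ : (0 : ℝ) < v := zero_lt_one.trans hv
    have hu := hM _ (Real.rpow_pos_of_pos hv₀ (1 - ε))
    rw [← Real.rpow_natCast, ← Real.rpow_mul hv₀.le] at hu
    have hbound := pow_add_le_rpow_of_rpow_mul_pow_le (κ := κ) hm
      (hrange _ (Real.rpow_pos_of_pos hv₀ (1 - ε))).1 hv₀ hu
    have hd₁ : v ^ (d - 1) = v ^ ((d : ℝ) - 1) := by
      rw [← Real.rpow_natCast, Nat.cast_sub (by omega), Nat.cast_one]
    calc v ^ (d - 1) * h (v ^ (1 - ε)) ^ (m + κ)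
        ≤ v ^ ((d : ℝ) - 1) * (M ^ q * v ^ (-((1 - ε) * d * q))) := by
          rw [hd₁]
          gcongr
      _ = M ^ q * v ^ ((d : ℝ) - 1 - (1 - ε) * d * q) := by
          rw [sub_eq_add_neg _ ((1 - ε) * d * q), Real.rpow_add hv₀]
          ring

/-- Calculus lemma behind Corollary 3.3.  Let `d ≥ 2`, `m, κ ≥ 1`, and let
`h : (0,∞) → [0,1]` be decreasing with `u^d h(u)^m` bounded.  Then for every
`ε ∈ [0, κ/(m+κ))` the integral `∫_0^∞ v^{d−1} h(v^{1−ε})^{m+κ} dv` is finite. -/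
theorem stmt14 (d m κ : ℕ) (hd : 2 ≤ d) (hm : 0 < m) (hκ : 0 < κ)
    (h : ℝ → ℝ) (hanti : AntitoneOn h (Set.Ioi 0))
    (hrange : ∀ u : ℝ, 0 < u → h u ∈ Set.Icc (0 : ℝ) 1)
    (M : ℝ) (hM : ∀ u : ℝ, 0 < u → u ^ d * h u ^ m ≤ M) :
    ∀ ε : ℝ, 0 ≤ ε → ε < (κ : ℝ) / ((m : ℝ) + κ) →
      ∫⁻ v in Set.Ioi (0 : ℝ),
        ENNReal.ofReal (v ^ (d - 1) * h (v ^ ((1 : ℝ) - ε)) ^ (m + κ)) < ⊤ :=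
  stmt14_general d m κ hd hm h hrange M hM
end

section
/- Sparseness of holes: Fix a decreasing function g and ε > 0 and a lattice environment w on (Z^d, E_d), d ≥ 2, with b ≥ 2d a natural number. Suppose for all large n, every box B_b(z) with z ∈ B_{n+b} contains at most 3d−1 edges of conductance ≤ g(n^{1−ε}), and let D_n be the unique infinite open cluster of the environment where edges with w_e ≤ g(n^{1−ε}) are closed. Then for n large enough, the hole set I_n = B_n ∖ D_n is b-sparse, that is, every translated box B_b(z), z ∈ Z^d, contains at most one site of I_n. -/
/-!
Write `S` for the infinite cluster. Edges with exactly one endpoint in `S` (interface edges) are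
closed, so it suffices to find, near two holes at distance at most `2b`, a box of radius `b`
containing `3d` interface edges. If both holes have all their neighbours in `S`, their upper edges
and one lower edge per direction give `3d` of them. Otherwise a monotone walk from a hole with a
hole neighbour to a site of `S` produces a hole `h₀` with a hole neighbour next to some `a ∈ S`,
and we count in the box around `a`, where every line meeting both `S` and its complement carries
an interface edge:
* a line inside `S` and one outside `S` force `2b + 1` mixed slices or parallel lines;
* if no line lies inside `S`, the path from `a` to infinity crosses `b + 1` levels of some
  coordinate, each lying on `d - 1` mixed lines;
* if no line lies outside `S` and the component of `h₀` outside `S` reaches the boundary of the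
  box, the same count applies to it, with one extra mixed line through a second line of holes or,
  if there is none, two interface edges on each crossing line;
* if that component stays inside, every line through `h₀` or its neighbour leaves it upwards and
  downwards, which gives `4d - 2` edges.
-/

open Finset Function

theorem Int.exists_change_of_le {P : ℤ → Prop} {s t : ℤ} (hst : s ≤ t) (hs : P s) (ht : ¬P t) :
    ∃ r, s ≤ r ∧ r < t ∧ P r ∧ ¬P (r + 1) := by
  induction t, hst using Int.leInduction with
  | base => exact absurd hs ht
  | succ t hst ih =>
    by_cases hPt : P t
    · exact ⟨t, hst, by omega, hPt, ht⟩
    · obtain ⟨r, hsr, hrt, hr⟩ := ih hPt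
      exact ⟨r, hsr, by omega, hr⟩

namespace HoleSparsity

variable {d : ℕ}

lemma update_add_single (p : Fin d → ℤ) (j : Fin d) (t : ℤ) :
    update p j t + Pi.single j 1 = update p j (t + 1) := by
  ext m
  by_cases hm : m = j
  · subst hm; simp
  · simp [hm]

lemma update_sub_one_add_single (z : Fin d → ℤ) (j : Fin d) :
    update z j (z j - 1) + Pi.single j 1 = z := by
  rw [update_add_single, sub_add_cancel, update_eq_self]

noncomputable def box (c : Fin d → ℤ) (r : ℤ) : Finset (Fin d → ℤ) :=
  Fintype.piFinset fun i => Icc (c i - r) (c i + r)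

@[simp] lemma mem_box {c p : Fin d → ℤ} {r : ℤ} :
    p ∈ box c r ↔ ∀ i, c i - r ≤ p i ∧ p i ≤ c i + r := by
  simp only [box, Fintype.mem_piFinset, Finset.mem_Icc]

lemma mem_box_zero {p : Fin d → ℤ} {r : ℤ} : p ∈ box 0 r ↔ ∀ i, |p i| ≤ r := by
  simp only [mem_box, Pi.zero_apply, zero_sub, zero_add, abs_le]

lemma update_mem_box {c p : Fin d → ℤ} {r : ℤ} (hp : p ∈ box c r) {j : Fin d} {t : ℤ}
    (ht : c j - r ≤ t ∧ t ≤ c j + r) : update p j t ∈ box c r := by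
  rw [mem_box] at hp ⊢
  intro m
  by_cases hm : m = j
  · subst hm; simpa using ht
  · simpa [hm] using hp m

/-- The edge `(p, i)` joins `p` to `p + eᵢ`. -/
def IsInterfaceEdge (S : Set (Fin d → ℤ)) (e : (Fin d → ℤ) × Fin d) : Prop :=
  ¬(e.1 ∈ S ↔ e.1 + Pi.single e.2 1 ∈ S)

@[simp] lemma isInterfaceEdge_compl {S : Set (Fin d → ℤ)} {e : (Fin d → ℤ) × Fin d} :
    IsInterfaceEdge Sᶜ e ↔ IsInterfaceEdge S e := by
  simp only [IsInterfaceEdge, Set.mem_compl_iff]; tauto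

open Classical in
noncomputable def interfaceCount (S : Set (Fin d → ℤ)) (c : Fin d → ℤ) (r : ℤ) : ℕ :=
  ((box c r ×ˢ univ).filter (IsInterfaceEdge S)).card

lemma interfaceCount_compl (S : Set (Fin d → ℤ)) (c : Fin d → ℤ) (r : ℤ) :
    interfaceCount Sᶜ c r = interfaceCount S c r := by
  classical
  unfold interfaceCount
  congr 1
  exact filter_congr fun e _ => isInterfaceEdge_compl

lemma card_le_interfaceCount {S : Set (Fin d → ℤ)} {c : Fin d → ℤ} {r : ℤ} {β : Type*}
    (κ : (Fin d → ℤ) × Fin d → β) (T : Finset β)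
    (hT : ∀ t ∈ T, ∃ e : (Fin d → ℤ) × Fin d, e.1 ∈ box c r ∧ IsInterfaceEdge S e ∧ κ e = t) :
    T.card ≤ interfaceCount S c r := by
  classical
  refine card_le_card_of_surjOn κ fun t ht => ?_
  obtain ⟨e, hbox, hS, rfl⟩ := hT t ht
  exact ⟨e, mem_filter.2 ⟨mem_product.2 ⟨hbox, mem_univ _⟩, hS⟩, rfl⟩

def LatticeAdj (p q : Fin d → ℤ) : Prop :=
  ∃ i, q = p + Pi.single i 1 ∨ p = q + Pi.single i 1

lemma LatticeAdj.symm {p q : Fin d → ℤ} (h : LatticeAdj p q) : LatticeAdj q p := by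
  obtain ⟨i, h⟩ := h
  exact ⟨i, h.symm⟩

lemma LatticeAdj.coord_le {p q : Fin d → ℤ} (h : LatticeAdj p q) (k : Fin d) :
    p k ≤ q k + 1 ∧ q k ≤ p k + 1 := by
  obtain ⟨i, rfl | rfl⟩ := h <;> by_cases hk : k = i <;> simp [hk] <;> omega

lemma latticeAdj_update (p : Fin d → ℤ) (j : Fin d) (t : ℤ) :
    LatticeAdj (update p j t) (update p j (t + 1)) :=
  ⟨j, Or.inl (update_add_single p j t).symm⟩

lemma LatticeAdj.exists_isInterfaceEdge {S : Set (Fin d → ℤ)} {p q : Fin d → ℤ}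
    (h : LatticeAdj p q) (hp : p ∉ S) (hq : q ∈ S) :
    ∃ k, IsInterfaceEdge S (p, k) ∨ IsInterfaceEdge S (q, k) := by
  obtain ⟨k, rfl | rfl⟩ := h
  · exact ⟨k, Or.inl fun h => hp (h.2 hq)⟩
  · exact ⟨k, Or.inr fun h => hp (h.1 hq)⟩

/-- The start `p` of the path need not lie in `T`. -/
def ChainIn (T : Set (Fin d → ℤ)) (p q : Fin d → ℤ) : Prop :=
  Relation.ReflTransGen (fun x y => LatticeAdj x y ∧ y ∈ T) p q

lemma ChainIn.mem {T : Set (Fin d → ℤ)} {p q : Fin d → ℤ} (h : ChainIn T p q) (hp : p ∈ T) :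
    q ∈ T := by
  induction h with
  | refl => exact hp
  | tail _ hstep _ => exact hstep.2

/-- Walking monotonically from `u ∉ T` towards `v ∈ T` one crosses into `T` at some step; the
last site outside `T` is `u` itself or has a predecessor outside `T`. -/
lemma exists_adj_notMem_mem {T : Set (Fin d → ℤ)} {u v : Fin d → ℤ} (hu : u ∉ T) (hv : v ∈ T) :
    ∃ p q, p ∉ T ∧ q ∈ T ∧ LatticeAdj p q ∧ (∀ i, p i ∈ Set.uIcc (u i) (v i)) ∧
      (∀ i, q i ∈ Set.uIcc (u i) (v i)) ∧ (p = u ∨ ∃ p', LatticeAdj p p' ∧ p' ∉ T) := by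
  induction hn : ∑ i, (v i - u i).natAbs using Nat.strong_induction_on generalizing u with
  | _ n ih =>
  obtain ⟨k, hk⟩ : ∃ k, u k ≠ v k := by
    by_contra! h
    exact hu (funext h ▸ hv)
  set u' := update u k (if u k < v k then u k + 1 else u k - 1) with hu'_def
  have hadj : LatticeAdj u u' := by
    split_ifs at hu'_def with h
    · simpa [hu'_def] using latticeAdj_update u k (u k)
    · simpa [hu'_def] using (latticeAdj_update u k (u k - 1)).symm
  have hcoord : ∀ i, u' i ∈ Set.uIcc (u i) (v i) := by
    intro i
    rw [Set.mem_uIcc]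
    by_cases hi : i = k
    · subst hi; simp only [hu'_def, update_self]; split_ifs <;> omega
    · simp only [hu'_def, update_of_ne hi]; omega
  have hsub : ∀ i, ∀ t ∈ Set.uIcc (u' i) (v i), t ∈ Set.uIcc (u i) (v i) := by
    intro i t
    have := hcoord i
    simp only [Set.mem_uIcc] at this ⊢
    omega
  by_cases hu' : u' ∈ T
  · exact ⟨u, u', hu, hu', hadj, fun i => Set.left_mem_uIcc, hcoord, Or.inl rfl⟩
  have hlt : ∑ i, (v i - u' i).natAbs < n := by
    rw [← hn]
    refine sum_lt_sum (fun i _ => ?_) ⟨k, mem_univ _, ?_⟩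
    · have := hcoord i
      rw [Set.mem_uIcc] at this
      omega
    · simp only [hu'_def, update_self]; split_ifs <;> omega
  obtain ⟨p, q, hp, hq, hpq, hph, hqh, hwit⟩ := ih _ hlt hu' rfl
  refine ⟨p, q, hp, hq, hpq, fun i => hsub i _ (hph i), fun i => hsub i _ (hqh i), ?_⟩
  rcases hwit with rfl | hwit
  · exact Or.inr ⟨u, hadj.symm, hu⟩
  · exact Or.inr hwit

lemma exists_exit_above {T : Set (Fin d → ℤ)} {p : Fin d → ℤ} {j : Fin d} {t : ℤ}
    (hpt : p j ≤ t) (hp : p ∈ T) (ht : update p j t ∉ T) :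
    ∃ s, p j ≤ s ∧ s < t ∧ update p j s ∈ T ∧ update p j s + Pi.single j 1 ∉ T := by
  obtain ⟨s, h⟩ := Int.exists_change_of_le (P := fun s => update p j s ∈ T) hpt (by simpa) ht
  exact ⟨s, by simpa [update_add_single] using h⟩

lemma exists_exit_below {T : Set (Fin d → ℤ)} {p : Fin d → ℤ} {j : Fin d} {t : ℤ}
    (htp : t ≤ p j) (ht : update p j t ∉ T) (hp : p ∈ T) :
    ∃ s, t ≤ s ∧ s < p j ∧ update p j s ∉ T ∧ update p j s + Pi.single j 1 ∈ T := by
  obtain ⟨s, h⟩ := Int.exists_change_of_le (P := fun s => update p j s ∉ T) htp ht (by simpa)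
  exact ⟨s, by simpa [update_add_single] using h⟩

/-- A path in `T` leaving the box of radius `r - 1` around `c` meets, inside the box of radius
`r`, every level of some coordinate between its start and a face of that box. -/
lemma ChainIn.exists_levels {T : Set (Fin d → ℤ)} {c u z : Fin d → ℤ} {r : ℤ} (hu : u ∈ T)
    (hub : u ∈ box c (r - 1)) (hch : ChainIn T u z) (hz : z ∉ box c (r - 1)) :
    ∃ i w, (w = c i + r ∨ w = c i - r) ∧
      ∀ t ∈ Finset.uIcc (u i) w, ∃ p ∈ box c r, p ∈ T ∧ p i = t := by
  induction hch using Relation.ReflTransGen.head_induction_on with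
  | refl => exact absurd hub hz
  | head hstep hch ih =>
    rename_i u u'
    have hnear := hstep.1.coord_le
    rw [mem_box] at hub
    obtain ⟨i, w, hw, hlev⟩ : ∃ i w, (w = c i + r ∨ w = c i - r) ∧
        ∀ t ∈ Finset.uIcc (u' i) w, ∃ p ∈ box c r, p ∈ T ∧ p i = t := by
      by_cases hu' : u' ∈ box c (r - 1)
      · exact ih hstep.2 hu'
      simp only [mem_box, not_forall] at hu'
      obtain ⟨i, hi⟩ := hu'
      refine ⟨i, u' i, by have := hub i; have := hnear i; omega, fun t ht => ⟨u', ?_, hstep.2, ?_⟩⟩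
      · rw [mem_box]; intro k; have := hub k; have := hnear k; omega
      · exact ((by simpa using ht) : t = u' i).symm
    refine ⟨i, w, hw, fun t ht => ?_⟩
    by_cases htu : t = u i
    · exact ⟨u, by rw [mem_box]; intro k; have := hub k; omega, hu, htu.symm⟩
    · rw [Finset.mem_uIcc] at ht
      exact hlev t (by rw [Finset.mem_uIcc]; have := hnear i; omega)

def IsUniformLine (S : Set (Fin d → ℤ)) (c : Fin d → ℤ) (r : ℤ) (p : Fin d → ℤ) (j : Fin d) :
    Prop :=
  ∀ t, c j - r ≤ t → t ≤ c j + r → (update p j t ∈ S ↔ p ∈ S)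

section Lines

variable {S : Set (Fin d → ℤ)} {c p : Fin d → ℤ} {r : ℤ} {j : Fin d}

@[simp] lemma isUniformLine_compl : IsUniformLine Sᶜ c r p j ↔ IsUniformLine S c r p j := by
  simp only [IsUniformLine, Set.mem_compl_iff, not_iff_not]

lemma exists_isInterfaceEdge_above {t : ℤ} (hp : p ∈ box c r) (hpt : p j ≤ t)
    (htr : t ≤ c j + r) (h : ¬(update p j t ∈ S ↔ p ∈ S)) :
    ∃ q ∈ box c r, (∀ m ≠ j, q m = p m) ∧ IsInterfaceEdge S (q, j) ∧ (q ∈ S ↔ p ∈ S) := by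
  obtain ⟨s, hps, hst, hs, hs1⟩ :=
    exists_exit_above (T := {x | x ∈ S ↔ p ∈ S}) hpt Iff.rfl h
  refine ⟨update p j s, update_mem_box hp ?_, fun m hm => update_of_ne hm _ _,
    fun h => hs1 (h.symm.trans hs), hs⟩
  have := (mem_box.1 hp) j
  omega

lemma exists_isInterfaceEdge_below {t : ℤ} (hp : p ∈ box c r) (htr : c j - r ≤ t)
    (htp : t ≤ p j) (h : ¬(update p j t ∈ S ↔ p ∈ S)) :
    ∃ q ∈ box c r, (∀ m ≠ j, q m = p m) ∧ IsInterfaceEdge S (q, j) ∧ ¬(q ∈ S ↔ p ∈ S) := by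
  obtain ⟨s, hts, hsp, hs, hs1⟩ :=
    exists_exit_below (T := {x | x ∈ S ↔ p ∈ S}) htp h Iff.rfl
  refine ⟨update p j s, update_mem_box hp ?_, fun m hm => update_of_ne hm _ _,
    fun h => hs (h.trans hs1), hs⟩
  have := (mem_box.1 hp) j
  omega

lemma exists_isInterfaceEdge_of_not_isUniformLine (hp : p ∈ box c r)
    (h : ¬IsUniformLine S c r p j) :
    ∃ q ∈ box c r, (∀ m ≠ j, q m = p m) ∧ IsInterfaceEdge S (q, j) := by
  simp only [IsUniformLine, not_forall] at h
  obtain ⟨t, ht1, ht2, ht⟩ := h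
  rcases le_total (p j) t with hpt | htp
  · obtain ⟨q, hq, hqp, hqS, -⟩ := exists_isInterfaceEdge_above hp hpt ht2 ht
    exact ⟨q, hq, hqp, hqS⟩
  · obtain ⟨q, hq, hqp, hqS, -⟩ := exists_isInterfaceEdge_below hp ht1 htp ht
    exact ⟨q, hq, hqp, hqS⟩

end Lines

section Counting

variable {S : Set (Fin d → ℤ)} {c : Fin d → ℤ} {r : ℤ}

/-- A pair `(j, μ) ∈ A` stands for the lines in direction `j` with `f j`-coordinate `μ`. -/
lemma card_le_interfaceCount_of_lines (f : Fin d → Fin d) (A : Finset (Fin d × ℤ))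
    (hA : ∀ a ∈ A, ∃ q ∈ box c r, q (f a.1) = a.2 ∧ IsInterfaceEdge S (q, a.1)) :
    A.card ≤ interfaceCount S c r :=
  card_le_interfaceCount (fun e => (e.2, e.1 (f e.2))) A fun a ha => by
    obtain ⟨q, hq, hqa, hqS⟩ := hA a ha
    exact ⟨(q, a.1), hq, hqS, by simp [hqa]⟩

lemma two_mul_card_le_interfaceCount_of_lines (f : Fin d → Fin d) (A : Finset (Fin d × ℤ))
    (hA : ∀ a ∈ A,
      (∃ q ∈ box c r, q (f a.1) = a.2 ∧ IsInterfaceEdge S (q, a.1) ∧ q ∈ S) ∧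
      (∃ q ∈ box c r, q (f a.1) = a.2 ∧ IsInterfaceEdge S (q, a.1) ∧ q ∉ S)) :
    2 * A.card ≤ interfaceCount S c r := by
  classical
  have := card_le_interfaceCount (fun e => ((e.2, e.1 (f e.2)), decide (e.1 ∈ S)))
    (A ×ˢ (univ : Finset Bool)) fun ⟨a, β⟩ ha => by
      obtain ⟨ha, -⟩ := mem_product.1 ha
      cases β
      · obtain ⟨q, hq, hqa, hqS, hq'⟩ := (hA a ha).2
        exact ⟨(q, a.1), hq, hqS, by simp [hqa, hq']⟩
      · obtain ⟨q, hq, hqa, hqS, hq'⟩ := (hA a ha).1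
        exact ⟨(q, a.1), hq, hqS, by simp [hqa, hq']⟩
  simpa [card_product, mul_comm] using this

lemma card_erase_product_union (i : Fin d) (L M : Finset ℤ) :
    ((univ.erase i ×ˢ L) ∪ ({i} ×ˢ M)).card = (d - 1) * L.card + M.card := by
  rw [card_union_of_disjoint, card_product, card_product, card_erase_of_mem (mem_univ _),
    card_univ, Fintype.card_fin, card_singleton, one_mul]
  rw [disjoint_left]
  rintro ⟨j, ℓ⟩ h1 h2
  simp only [mem_product, mem_erase, mem_singleton] at h1 h2
  exact h1.1.1 h2.1

end Counting

section Cases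

variable {S : Set (Fin d → ℤ)} {c : Fin d → ℤ} {b : ℕ}

lemma two_mul_add_one_le_interfaceCount_of_slices {sH sD : Fin d → ℤ} {i : Fin d}
    (hsH : sH ∈ box c b) (hsHS : sH ∉ S) (hH : IsUniformLine S c b sH i)
    (hsD : sD ∈ box c b) (hsDS : sD ∈ S) (hD : IsUniformLine S c b sD i) :
    2 * b + 1 ≤ interfaceCount S c b := by
  have hslice : ∀ t ∈ Icc (c i - b) (c i + b),
      ∃ e : (Fin d → ℤ) × Fin d, e.1 ∈ box c b ∧ IsInterfaceEdge S e ∧ e.1 i = t := by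
    intro t ht
    rw [mem_Icc] at ht
    have hu : update sH i t ∉ S := fun h => hsHS ((hH t ht.1 ht.2).1 h)
    have hv : update sD i t ∈ S := (hD t ht.1 ht.2).2 hsDS
    have hhull : ∀ x, (∀ k, x k ∈ Set.uIcc (update sH i t k) (update sD i t k)) →
        x ∈ box c b ∧ x i = t := by
      intro x hx
      have h1 := mem_box.1 (update_mem_box hsH ht)
      have h2 := mem_box.1 (update_mem_box hsD ht)
      refine ⟨mem_box.2 fun k => ?_, ?_⟩
      · have := hx k; have := h1 k; have := h2 k
        simp only [Set.mem_uIcc] at *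
        omega
      · simpa using hx i
    obtain ⟨p, q, hp, hq, hpq, hph, hqh, -⟩ := exists_adj_notMem_mem hu hv
    obtain ⟨k, hk | hk⟩ := hpq.exists_isInterfaceEdge hp hq
    · exact ⟨(p, k), (hhull p hph).1, hk, (hhull p hph).2⟩
    · exact ⟨(q, k), (hhull q hqh).1, hk, (hhull q hqh).2⟩
  have := card_le_interfaceCount (fun e => e.1 i) _ hslice
  rw [Int.card_Icc] at this
  omega

lemma two_mul_add_one_le_interfaceCount_of_isUniformLine {sH sD : Fin d → ℤ} {iH iD : Fin d}
    (hsH : sH ∈ box c b) (hsHS : sH ∉ S) (hH : IsUniformLine S c b sH iH)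
    (hsD : sD ∈ box c b) (hsDS : sD ∈ S) (hD : IsUniformLine S c b sD iD) :
    2 * b + 1 ≤ interfaceCount S c b := by
  by_cases h : ∃ t, c iH - b ≤ t ∧ t ≤ c iH + b ∧ IsUniformLine S c b (update sH iH t) iD
  · obtain ⟨t, ht1, ht2, ht⟩ := h
    exact two_mul_add_one_le_interfaceCount_of_slices (update_mem_box hsH ⟨ht1, ht2⟩)
      (fun h => hsHS ((hH t ht1 ht2).1 h)) ht hsD hsDS hD
  push Not at h
  have hne : iH ≠ iD := by
    rintro rfl
    have := mem_box.1 hsH iH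
    exact h (sH iH) this.1 this.2 (by rwa [update_eq_self])
  have := card_le_interfaceCount_of_lines (S := S) (c := c) (r := b) (fun _ => iH)
    ({iD} ×ˢ Icc (c iH - b) (c iH + b)) fun ⟨j, t⟩ hjt => by
      simp only [mem_product, mem_singleton, mem_Icc] at hjt
      obtain ⟨rfl, ht1, ht2⟩ := hjt
      obtain ⟨q, hq, hqp, hqS⟩ := exists_isInterfaceEdge_of_not_isUniformLine
        (update_mem_box hsH ⟨ht1, ht2⟩) (h t ht1 ht2)
      exact ⟨q, hq, by simp [hqp iH hne], hqS⟩
  rw [card_product, card_singleton, one_mul, Int.card_Icc] at this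
  omega

lemma le_interfaceCount_of_forall_not_isUniformLine {i m : Fin d} (hmi : m ≠ i) (L M : Finset ℤ)
    (hmix : ∀ p ∈ box c b, p ∈ S → ∀ j, ¬IsUniformLine S c b p j)
    (hL : ∀ ℓ ∈ L, ∃ p ∈ box c b, p ∈ S ∧ p i = ℓ)
    (hM : ∀ μ ∈ M, ∃ p ∈ box c b, p ∈ S ∧ p m = μ) :
    (d - 1) * L.card + M.card ≤ interfaceCount S c b := by
  rw [← card_erase_product_union i L M]
  refine card_le_interfaceCount_of_lines (fun j => if j = i then m else i) _ ?_
  rintro ⟨j, ℓ⟩ h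
  simp only [mem_union, mem_product, mem_erase, mem_univ, mem_singleton] at h
  rcases h with ⟨⟨hji, -⟩, hℓ⟩ | ⟨rfl, hℓ⟩
  · obtain ⟨p, hp, hpS, rfl⟩ := hL ℓ hℓ
    obtain ⟨q, hq, hqp, hqS⟩ := exists_isInterfaceEdge_of_not_isUniformLine hp (hmix p hp hpS j)
    exact ⟨q, hq, by simp [hji, hqp i (Ne.symm hji)], hqS⟩
  · obtain ⟨p, hp, hpS, rfl⟩ := hM ℓ hℓ
    obtain ⟨q, hq, hqp, hqS⟩ := exists_isInterfaceEdge_of_not_isUniformLine hp (hmix p hp hpS j)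
    exact ⟨q, hq, by simp [hqp m hmi], hqS⟩

/-- The sites outside `S` have their neighbours in the directions `j ≠ i` in `S`, so each line
crossing theirs carries two interface edges. -/
lemma le_interfaceCount_of_subset_line {h₀ : Fin d → ℤ} {i : Fin d} (L : Finset ℤ)
    (hh₀ : h₀ ∈ box c (b - 1)) (hline : ∀ p ∈ box c b, p ∉ S → ∀ j ≠ i, p j = h₀ j)
    (hL : ∀ ℓ ∈ L, ∃ p ∈ box c b, p ∉ S ∧ p i = ℓ) :
    2 * ((d - 1) * L.card) ≤ interfaceCount S c b := by
  have := two_mul_card_le_interfaceCount_of_lines (S := S) (c := c) (r := b) (fun _ => i)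
    (univ.erase i ×ˢ L) fun ⟨j, ℓ⟩ h => by
      simp only [mem_product, mem_erase, mem_univ, and_true] at h
      obtain ⟨hji, hℓ⟩ := h
      obtain ⟨p, hp, hpS, rfl⟩ := hL ℓ hℓ
      have hpj := hline p hp hpS j hji
      have hbox := mem_box.1 hh₀ j
      have hnb : ∀ t, (t = p j + 1 ∨ t = p j - 1) → update p j t ∈ S := by
        intro t ht
        by_contra hS
        have := hline _ (update_mem_box (j := j) (t := t) hp (by omega)) hS j hji
        simp only [update_self] at this
        omega
      have hdown := hnb _ (Or.inr rfl)
      have hup : p + Pi.single j 1 ∈ S := by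
        simpa [← update_add_single] using hnb _ (Or.inl rfl)
      refine ⟨⟨update p j (p j - 1), update_mem_box hp (by omega),
        update_of_ne (Ne.symm hji) _ _, fun h => hpS ?_, hdown⟩,
        ⟨p, hp, rfl, fun h => hpS (h.2 hup), hpS⟩⟩
      simpa [update_sub_one_add_single] using h.1 hdown
  rwa [card_product, card_erase_of_mem (mem_univ _), card_univ, Fintype.card_fin] at this

end Cases

section Enclosed

variable {S : Set (Fin d → ℤ)} {c h₀ : Fin d → ℤ} {r : ℤ}

/-- If the cluster of `h₀` in the complement of `S` stays away from the faces of the box, each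
line through one of its sites leaves it upwards into `S` and is entered from `S` below. -/
lemma exists_isInterfaceEdge_of_enclosed (hh₀ : h₀ ∉ S)
    (hencl : ∀ z, ChainIn Sᶜ h₀ z → z ∈ box c (r - 1)) {p : Fin d → ℤ} (hp : ChainIn Sᶜ h₀ p)
    (j : Fin d) :
    (∃ q ∈ box c r, (∀ m ≠ j, q m = p m) ∧ IsInterfaceEdge S (q, j) ∧ q ∈ S) ∧
      (∃ q ∈ box c r, (∀ m ≠ j, q m = p m) ∧ IsInterfaceEdge S (q, j) ∧ q ∉ S) := by
  set K := {x | ChainIn Sᶜ h₀ x}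
  have hKS : ∀ x ∈ K, x ∉ S := fun x hx => ChainIn.mem hx hh₀
  have hKclosed : ∀ x ∈ K, ∀ y, LatticeAdj x y → y ∉ S → y ∈ K :=
    fun x hx y hxy hy => Relation.ReflTransGen.tail hx ⟨hxy, hy⟩
  have hpb := mem_box.1 (hencl p hp) j
  have hpr : p ∈ box c r := mem_box.2 fun k => by have := mem_box.1 (hencl p hp) k; omega
  have hout : ∀ t, (t = c j + r ∨ t = c j - r) → update p j t ∉ K := by
    intro t ht hK
    have := mem_box.1 (hencl _ hK) j
    simp only [update_self] at this
    omega
  constructor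
  · obtain ⟨s, hs1, hs2, hs, hs'⟩ :=
      exists_exit_below (T := K) (t := c j - r) (by omega) (hout _ (Or.inr rfl)) hp
    have hsS : update p j s ∈ S := by
      by_contra h
      exact hs (hKclosed _ hs' _ ⟨j, Or.inr rfl⟩ h)
    exact ⟨_, update_mem_box hpr (by omega), fun m hm => update_of_ne hm _ _,
      fun h => hKS _ hs' (h.1 hsS), hsS⟩
  · obtain ⟨s, hs1, hs2, hs, hs'⟩ :=
      exists_exit_above (T := K) (t := c j + r) (by omega) hp (hout _ (Or.inl rfl))
    have hsS : update p j s + Pi.single j 1 ∈ S := by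
      by_contra h
      exact hs' (hKclosed _ hs _ ⟨j, Or.inl rfl⟩ h)
    exact ⟨_, update_mem_box hpr (by omega), fun m hm => update_of_ne hm _ _,
      fun h => hKS _ hs (h.2 hsS), hKS _ hs⟩

lemma four_mul_sub_two_le_interfaceCount_of_enclosed {h' : Fin d → ℤ} (hd : 2 ≤ d)
    (hh₀ : h₀ ∉ S) (hh' : h' ∉ S) (hadj : LatticeAdj h₀ h')
    (hencl : ∀ z, ChainIn Sᶜ h₀ z → z ∈ box c (r - 1)) :
    4 * d - 2 ≤ interfaceCount S c r := by
  obtain ⟨k, hk⟩ : ∃ k, h₀ k ≠ h' k := by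
    obtain ⟨k, rfl | rfl⟩ := hadj <;> exact ⟨k, by simp⟩
  have : Nontrivial (Fin d) := Fin.nontrivial_iff_two_le.2 hd
  obtain ⟨m, hmk⟩ := exists_ne k
  set f : Fin d → Fin d := fun j => if j = k then m else k
  have hf : ∀ j, f j ≠ j := fun j => by by_cases hj : j = k <;> simp [f, hj, hmk, Ne.symm]
  have hline : ∀ p, ChainIn Sᶜ h₀ p → ∀ j,
      (∃ q ∈ box c r, q (f j) = p (f j) ∧ IsInterfaceEdge S (q, j) ∧ q ∈ S) ∧
      (∃ q ∈ box c r, q (f j) = p (f j) ∧ IsInterfaceEdge S (q, j) ∧ q ∉ S) := by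
    intro p hp j
    obtain ⟨⟨q, hq, hqp, hqS⟩, ⟨q', hq', hq'p, hq'S⟩⟩ :=
      exists_isInterfaceEdge_of_enclosed hh₀ hencl hp j
    exact ⟨⟨q, hq, hqp _ (hf j), hqS⟩, ⟨q', hq', hq'p _ (hf j), hq'S⟩⟩
  have := two_mul_card_le_interfaceCount_of_lines f
    ((univ.erase k ×ˢ {h₀ k, h' k}) ∪ ({k} ×ˢ {h₀ m})) fun ⟨j, μ⟩ h => by
      simp only [mem_union, mem_product, mem_erase, mem_univ, and_true, mem_insert,
        mem_singleton] at h
      rcases h with ⟨hjk, rfl | rfl⟩ | ⟨rfl, rfl⟩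
      · simpa [f, hjk] using hline h₀ .refl j
      · simpa [f, hjk] using hline h' (.single ⟨hadj, hh'⟩) j
      · simpa [f] using hline h₀ .refl j
  rw [card_erase_product_union, card_pair hk, card_singleton] at this
  omega

end Enclosed

lemma three_mul_le_interfaceCount_of_isolated {S : Set (Fin d → ℤ)} {x y : Fin d → ℤ} {b : ℕ}
    (hb : 1 ≤ b) (hxy : x ≠ y) (hx : x ∉ S) (hy : y ∉ S) (hxS : ∀ p, LatticeAdj x p → p ∈ S)
    (hyS : ∀ p, LatticeAdj y p → p ∈ S) (hnear : ∀ i, |x i - y i| ≤ 2 * b) :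
    3 * d ≤ interfaceCount S (fun i => max (x i) (y i) - b) b := by
  classical
  set c : Fin d → ℤ := fun i => max (x i) (y i) - b
  have hxc : x ∈ box c b := mem_box.2 fun i => by
    have := abs_le.1 (hnear i); simp only [c]; omega
  have hyc : y ∈ box c b := mem_box.2 fun i => by
    have := abs_le.1 (hnear i); simp only [c]; omega
  have hup : ∀ z, z ∉ S → (∀ p, LatticeAdj z p → p ∈ S) → ∀ j, IsInterfaceEdge S (z, j) :=
    fun z hz hzS j h => hz (h.2 (hzS _ ⟨j, Or.inl rfl⟩))
  -- the lower neighbour of whichever of `x`, `y` sits higher in direction `j` is in the box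
  have hdown : ∀ z ∈ box c b, z ∉ S → (∀ p, LatticeAdj z p → p ∈ S) → ∀ j, z j = c j + b →
      ∃ q ∈ box c b, q ∈ S ∧ IsInterfaceEdge S (q, j) := by
    intro z hz hzS hzN j hzj
    have hq : update z j (z j - 1) ∈ S :=
      hzN _ ⟨j, Or.inr (update_sub_one_add_single z j).symm⟩
    refine ⟨_, update_mem_box hz ?_, hq, fun h => hzS ?_⟩
    · have := mem_box.1 hz j; omega
    · simpa [update_sub_one_add_single] using h.1 hq
  have := card_le_interfaceCount (S := S) (c := c) (r := b)
    (fun e => (e.2, if e.1 ∈ S then none else some e.1))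
    (univ ×ˢ {none, some x, some y}) fun ⟨j, o⟩ h => by
      simp only [mem_product, mem_univ, true_and, mem_insert, mem_singleton] at h
      rcases h with rfl | rfl | rfl
      · obtain ⟨q, hq, hqS, hqI⟩ : ∃ q ∈ box c b, q ∈ S ∧ IsInterfaceEdge S (q, j) := by
          rcases le_total (x j) (y j) with h | h
          · exact hdown y hyc hy hyS j (by simp [c, h])
          · exact hdown x hxc hx hxS j (by simp [c, h])
        exact ⟨(q, j), hq, hqI, by simp [hqS]⟩
      · exact ⟨(x, j), hxc, hup x hx hxS j, by simp [hx]⟩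
      · exact ⟨(y, j), hyc, hup y hy hyS j, by simp [hy]⟩
  rw [card_product, card_univ, Fintype.card_fin, card_insert_of_notMem (by simp),
    card_pair (by simpa using hxy)] at this
  omega

section Core

variable {S : Set (Fin d → ℤ)} {a h₀ : Fin d → ℤ} {b : ℕ}

lemma three_mul_le_interfaceCount_of_mem_not_isUniformLine (hd : 2 ≤ d) (hb : 2 * d ≤ b)
    (ha : a ∈ S) (harm : ∃ z, ChainIn S a z ∧ z ∉ box a (b - 1))
    (hmix : ∀ p ∈ box a b, p ∈ S → ∀ j, ¬IsUniformLine S a b p j) :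
    3 * d ≤ interfaceCount S a b := by
  have : Nontrivial (Fin d) := Fin.nontrivial_iff_two_le.2 hd
  obtain ⟨z, hz, hzb⟩ := harm
  obtain ⟨i, w, hw, hlev⟩ := ChainIn.exists_levels ha (mem_box.2 fun k => by omega) hz hzb
  obtain ⟨m, hmi⟩ := exists_ne i
  have := le_interfaceCount_of_forall_not_isUniformLine hmi (uIcc (a i) w) {a m} hmix hlev <| by
    simp only [mem_singleton]
    rintro μ rfl
    exact ⟨a, mem_box.2 fun k => by omega, ha, rfl⟩
  rw [Int.card_uIcc, card_singleton, show (w - a i).natAbs = b by omega] at this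
  obtain ⟨e, rfl⟩ : ∃ e, d = e + 2 := ⟨d - 2, by omega⟩
  rw [show e + 2 - 1 = e + 1 by omega] at this
  nlinarith

lemma three_mul_le_interfaceCount_of_not_mem_not_isUniformLine {h' : Fin d → ℤ} (hd : 2 ≤ d)
    (hb : 2 * d ≤ b) (hh₀ : h₀ ∉ S) (hh' : h' ∉ S) (hah₀ : LatticeAdj a h₀)
    (hh₀h' : LatticeAdj h₀ h') (hmix : ∀ p ∈ box a b, p ∉ S → ∀ j, ¬IsUniformLine S a b p j) :
    3 * d ≤ interfaceCount S a b := by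
  have hh₀box : h₀ ∈ box a (b - 1) := mem_box.2 fun k => by have := hah₀.coord_le k; omega
  by_cases hencl : ∀ z, ChainIn Sᶜ h₀ z → z ∈ box a (b - 1)
  · have := four_mul_sub_two_le_interfaceCount_of_enclosed hd hh₀ hh' hh₀h' hencl
    omega
  push Not at hencl
  obtain ⟨z, hz, hzb⟩ := hencl
  obtain ⟨i, w, hw, hlev⟩ := ChainIn.exists_levels (T := Sᶜ) hh₀ hh₀box hz hzb
  have hL : b ≤ (uIcc (h₀ i) w).card := by
    rw [Int.card_uIcc]; have := hah₀.coord_le i; omega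
  obtain ⟨e, rfl⟩ : ∃ e, d = e + 2 := ⟨d - 2, by omega⟩
  by_cases hoff : ∃ q ∈ box a b, q ∉ S ∧ ∃ m ≠ i, q m ≠ h₀ m
  · obtain ⟨q, hq, hqS, m, hmi, hqm⟩ := hoff
    have := le_interfaceCount_of_forall_not_isUniformLine (S := Sᶜ) hmi (uIcc (h₀ i) w)
      {h₀ m, q m} (fun p hp hpS j => by simpa using hmix p hp hpS j) hlev <| by
        simp only [mem_insert, mem_singleton]
        rintro μ (rfl | rfl)
        exacts [⟨h₀, mem_box.2 fun k => by have := mem_box.1 hh₀box k; omega, hh₀, rfl⟩,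
          ⟨q, hq, hqS, rfl⟩]
    rw [interfaceCount_compl, card_pair (Ne.symm hqm), show e + 2 - 1 = e + 1 by omega] at this
    nlinarith
  · push Not at hoff
    have := le_interfaceCount_of_subset_line (uIcc (h₀ i) w) hh₀box hoff hlev
    rw [show e + 2 - 1 = e + 1 by omega] at this
    nlinarith

theorem three_mul_le_interfaceCount {h' : Fin d → ℤ} (hd : 2 ≤ d) (hb : 2 * d ≤ b)
    (ha : a ∈ S) (hh₀ : h₀ ∉ S) (hh' : h' ∉ S) (hah₀ : LatticeAdj a h₀)
    (hh₀h' : LatticeAdj h₀ h') (harm : ∃ z, ChainIn S a z ∧ z ∉ box a (b - 1)) :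
    3 * d ≤ interfaceCount S a b := by
  by_cases hS : ∃ p ∈ box a b, p ∈ S ∧ ∃ j, IsUniformLine S a b p j
  · by_cases hH : ∃ p ∈ box a b, p ∉ S ∧ ∃ j, IsUniformLine S a b p j
    · obtain ⟨sD, hsD, hsDS, iD, hD⟩ := hS
      obtain ⟨sH, hsH, hsHS, iH, hH⟩ := hH
      have := two_mul_add_one_le_interfaceCount_of_isUniformLine hsH hsHS hH hsD hsDS hD
      omega
    push Not at hH
    exact three_mul_le_interfaceCount_of_not_mem_not_isUniformLine hd hb hh₀ hh' hah₀ hh₀h' hH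
  push Not at hS
  exact three_mul_le_interfaceCount_of_mem_not_isUniformLine hd hb ha harm hS

end Core

theorem exists_three_mul_le_interfaceCount_of_two_holes {S : Set (Fin d → ℤ)} {b n : ℕ}
    (hd : 2 ≤ d) (hb : 2 * d ≤ b) (hS : ∀ a ∈ S, ∃ z, ChainIn S a z ∧ z ∉ box a (b - 1))
    {y₀ : Fin d → ℤ} (hy₀ : y₀ ∈ S) (hy₀n : y₀ ∈ box 0 n) {x y : Fin d → ℤ} (hxy : x ≠ y)
    (hx : x ∉ S) (hy : y ∉ S) (hxn : x ∈ box 0 n) (hyn : y ∈ box 0 n)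
    (hnear : ∀ i, |x i - y i| ≤ 2 * b) :
    ∃ c ∈ box 0 (n + b), 3 * d ≤ interfaceCount S c b := by
  by_cases hiso : (∀ p, LatticeAdj x p → p ∈ S) ∧ ∀ p, LatticeAdj y p → p ∈ S
  · refine ⟨_, mem_box.2 fun i => ?_,
      three_mul_le_interfaceCount_of_isolated (by omega) hxy hx hy hiso.1 hiso.2 hnear⟩
    have := mem_box.1 hxn i; have := mem_box.1 hyn i
    simp only [Pi.zero_apply] at *
    omega
  obtain ⟨u, hu, hun, u', huu', hu'⟩ : ∃ u ∉ S, u ∈ box 0 n ∧ ∃ u', LatticeAdj u u' ∧ u' ∉ S := by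
    simp only [not_and_or, not_forall, exists_prop] at hiso
    rcases hiso with ⟨p, hp, hpS⟩ | ⟨p, hp, hpS⟩
    exacts [⟨x, hx, hxn, p, hp, hpS⟩, ⟨y, hy, hyn, p, hp, hpS⟩]
  obtain ⟨h₀, a, hh₀, ha, hadj, -, hah, hwit⟩ := exists_adj_notMem_mem hu hy₀
  obtain ⟨h', hh₀h', hh'⟩ : ∃ h', LatticeAdj h₀ h' ∧ h' ∉ S := by
    rcases hwit with rfl | hwit
    exacts [⟨u', huu', hu'⟩, hwit]
  refine ⟨a, mem_box.2 fun i => ?_,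
    three_mul_le_interfaceCount hd hb ha hh₀ hh' hadj.symm hh₀h' (hS a ha)⟩
  have := hah i; have := mem_box.1 hun i; have := mem_box.1 hy₀n i
  simp only [Set.mem_uIcc, Pi.zero_apply] at *
  omega

section Cluster

variable {α : Type*} {R : α → α → Prop} [Std.Symm R] {D : Set α}

lemma mem_iff_of_reflTransGen (hD : ∀ x, x ∈ D ↔ {y | Relation.ReflTransGen R x y}.Infinite)
    {x y : α} (hxy : Relation.ReflTransGen R x y) : x ∈ D ↔ y ∈ D := by
  have : {z | Relation.ReflTransGen R x z} = {z | Relation.ReflTransGen R y z} :=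
    Set.ext fun z => ⟨(Std.Symm.symm _ _ hxy).trans, hxy.trans⟩
  rw [hD, hD, this]

variable {R : (Fin d → ℤ) → (Fin d → ℤ) → Prop} [Std.Symm R] {D : Set (Fin d → ℤ)}

lemma chainIn_of_reflTransGen (hRadj : ∀ p q, R p q → LatticeAdj p q)
    (hD : ∀ x, x ∈ D ↔ {y | Relation.ReflTransGen R x y}.Infinite) {a z : Fin d → ℤ}
    (ha : a ∈ D) (h : Relation.ReflTransGen R a z) : ChainIn D a z := by
  induction h with
  | refl => exact .refl
  | tail hap hpq ih =>
    exact ih.tail ⟨hRadj _ _ hpq, (mem_iff_of_reflTransGen hD (hap.tail hpq)).1 ha⟩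

lemma exists_chainIn_notMem_box (hRadj : ∀ p q, R p q → LatticeAdj p q)
    (hD : ∀ x, x ∈ D ↔ {y | Relation.ReflTransGen R x y}.Infinite) {a : Fin d → ℤ}
    (ha : a ∈ D) (r : ℤ) : ∃ z, ChainIn D a z ∧ z ∉ box a r := by
  obtain ⟨z, hz, hzr⟩ := ((hD a).1 ha).exists_notMem_finset (box a r)
  exact ⟨z, chainIn_of_reflTransGen hRadj hD ha hz, hzr⟩

end Cluster

lemma single_eq_ite (i : Fin d) : (Pi.single i 1 : Fin d → ℤ) = fun j => if j = i then 1 else 0 :=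
  funext fun j => Pi.single_apply i 1 j

/-- Open edges at level `θ`, with the unit vector written as in the theorem so that its
hypothesis `hopenConn` applies verbatim. -/
def OpenStep (w : (Fin d → ℤ) × Fin d → ℝ) (θ : ℝ) (a c : Fin d → ℤ) : Prop :=
  ∃ i : Fin d, (c = a + (fun j => if j = i then 1 else 0) ∧ θ < w (a, i)) ∨
    (a = c + (fun j => if j = i then 1 else 0) ∧ θ < w (c, i))

section OpenStep

variable {w : (Fin d → ℤ) × Fin d → ℝ} {θ : ℝ}

instance : Std.Symm (OpenStep w θ) where
  symm _ _ := fun ⟨i, h⟩ => ⟨i, h.symm⟩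

lemma OpenStep.latticeAdj {a c : Fin d → ℤ} (h : OpenStep w θ a c) : LatticeAdj a c := by
  obtain ⟨i, h⟩ := h
  exact ⟨i, by simpa only [single_eq_ite] using h.imp And.left And.left⟩

lemma OpenStep.mono {θ' : ℝ} (hθ : θ' ≤ θ) {a c : Fin d → ℤ} (h : OpenStep w θ a c) :
    OpenStep w θ' a c := by
  obtain ⟨i, h⟩ := h
  exact ⟨i, h.imp (And.imp_right hθ.trans_lt) (And.imp_right hθ.trans_lt)⟩

variable {D : Set (Fin d → ℤ)}

lemma subset_of_le (hD : ∀ x, x ∈ D ↔ {y | Relation.ReflTransGen (OpenStep w θ) x y}.Infinite)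
    {θ' : ℝ} {D' : Set (Fin d → ℤ)}
    (hD' : ∀ x, x ∈ D' ↔ {y | Relation.ReflTransGen (OpenStep w θ') x y}.Infinite)
    (hθ : θ' ≤ θ) : D ⊆ D' := fun x hx =>
  (hD' x).2 (((hD x).1 hx).mono fun _ =>
    Relation.ReflTransGen.mono (fun _ _ => OpenStep.mono hθ) _ _)

lemma interfaceCount_le_card_filter
    (hD : ∀ x, x ∈ D ↔ {y | Relation.ReflTransGen (OpenStep w θ) x y}.Infinite)
    (c : Fin d → ℤ) (r : ℤ) :
    interfaceCount D c r ≤ ((box c r ×ˢ univ).filter fun e => w e ≤ θ).card := by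
  classical
  refine card_le_card fun e he => ?_
  simp only [mem_filter] at he ⊢
  refine ⟨he.1, not_lt.1 fun hθ => he.2 (mem_iff_of_reflTransGen hD (.single ?_))⟩
  exact ⟨e.2, Or.inl ⟨by rw [single_eq_ite], hθ⟩⟩

end OpenStep

end HoleSparsity

theorem stmt15_general (d b : ℕ) (hd : 2 ≤ d) (hb : 2 * d ≤ b)
    (ε : ℝ) (hε1 : ε < 1)
    (w : ((Fin d → ℤ) × Fin d) → ℝ)
    (g : ℝ → ℝ) (hganti : Antitone g)
    (openConn : ℕ → (Fin d → ℤ) → (Fin d → ℤ) → Prop)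
    (hopenConn : ∀ n x y, openConn n x y ↔ Relation.ReflTransGen
      (fun a c => ∃ i : Fin d,
        (c = a + (fun j => if j = i then 1 else 0) ∧
          g ((n : ℝ) ^ ((1 : ℝ) - ε)) < w (a, i)) ∨
        (a = c + (fun j => if j = i then 1 else 0) ∧
          g ((n : ℝ) ^ ((1 : ℝ) - ε)) < w (c, i))) x y)
    (D : ℕ → Set (Fin d → ℤ))
    (hDne : ∀ n, (D n).Nonempty)
    (hDinf : ∀ n x, x ∈ D n ↔ {y | openConn n x y}.Infinite)
    (N0 : ℕ)
    (hcount : ∀ n ≥ N0, ∀ z : Fin d → ℤ, (∀ i, |z i| ≤ (n : ℤ) + b) →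
      (((Fintype.piFinset fun i => Finset.Icc (z i - b) (z i + b)) ×ˢ
          (Finset.univ : Finset (Fin d))).filter
        (fun e => w e ≤ g ((n : ℝ) ^ ((1 : ℝ) - ε)))).card ≤ 3 * d - 1) :
    ∃ N : ℕ, ∀ n ≥ N, ∀ z : Fin d → ℤ,
      {x : Fin d → ℤ | (∀ i, |x i - z i| ≤ (b : ℤ)) ∧ (∀ i, |x i| ≤ (n : ℤ)) ∧
        x ∉ D n}.Subsingleton := by
  open HoleSparsity in
  set θ : ℕ → ℝ := fun n => g ((n : ℝ) ^ ((1 : ℝ) - ε))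
  have hD : ∀ n x, x ∈ D n ↔ {y | Relation.ReflTransGen (OpenStep w (θ n)) x y}.Infinite :=
    fun n x => by rw [hDinf]; simp only [hopenConn]; rfl
  have hθ : Antitone θ := fun m n hmn =>
    hganti (Real.rpow_le_rpow (by positivity) (by exact_mod_cast hmn) (by linarith))
  obtain ⟨y₀, hy₀⟩ := hDne N0
  obtain ⟨M, hM⟩ : ∃ M : ℕ, y₀ ∈ box 0 M := ⟨∑ i, (y₀ i).natAbs, mem_box_zero.2 fun i => by
    rw [Int.abs_eq_natAbs]
    exact_mod_cast single_le_sum (fun j _ => Nat.zero_le ((y₀ j).natAbs)) (mem_univ i)⟩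
  refine ⟨max N0 M, fun n hn z x hx y hy => by_contra fun hxy => ?_⟩
  have hnN0 : N0 ≤ n := le_of_max_le_left hn
  obtain ⟨c, hc, h3d⟩ := exists_three_mul_le_interfaceCount_of_two_holes hd hb
    (fun a ha => exists_chainIn_notMem_box (fun _ _ => OpenStep.latticeAdj) (hD n) ha _)
    (subset_of_le (hD N0) (hD n) (hθ hnN0) hy₀)
    (mem_box_zero.2 fun i => (mem_box_zero.1 hM i).trans (by exact_mod_cast le_of_max_le_right hn))
    hxy hx.2.2 hy.2.2 (mem_box_zero.2 hx.2.1) (mem_box_zero.2 hy.2.1) fun i => by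
      have := abs_le.1 (hx.1 i); have := abs_le.1 (hy.1 i); rw [abs_le]; omega
  have := (interfaceCount_le_card_filter (hD n) c b).trans (hcount n hnN0 c (mem_box_zero.1 hc))
  omega

/-- Sparseness of holes (Lemma 4.6).  Fix a decreasing function `g`, `ε ∈ (0,1)`, and a
deterministic environment `w` on the edges `(x, i)` of `(ℤ^d, 𝔈_d)`, `d ≥ 2`, with
`b ≥ 2d`.  Suppose for all large `n`, every box `B_b(z)` with `z ∈ B_{n+b}` contains at
most `3d−1` edges of conductance `≤ g(n^{1−ε})`, and let `D_n` be the unique infinite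
open cluster of the environment in which edges with `w_e ≤ g(n^{1−ε})` are closed
(i.e. `D_n` is nonempty, consists exactly of the sites whose open cluster is infinite,
and any two of its sites are open-connected).  Then for `n` large enough, the hole set
`I_n = B_n ∖ D_n` is `b`-sparse: every box `B_b(z)`, `z ∈ ℤ^d`, contains at most one
site of `I_n`. -/
theorem stmt15 (d b : ℕ) (hd : 2 ≤ d) (hb : 2 * d ≤ b)
    (ε : ℝ) (hε0 : 0 < ε) (hε1 : ε < 1)
    (w : ((Fin d → ℤ) × Fin d) → ℝ) (hwpos : ∀ e, 0 < w e)
    (g : ℝ → ℝ) (hganti : Antitone g) (hgpos : ∀ u, 0 < u → 0 < g u)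
    (hg0 : Filter.Tendsto g Filter.atTop (nhds 0))
    (openConn : ℕ → (Fin d → ℤ) → (Fin d → ℤ) → Prop)
    (hopenConn : ∀ n x y, openConn n x y ↔ Relation.ReflTransGen
      (fun a c => ∃ i : Fin d,
        (c = a + (fun j => if j = i then 1 else 0) ∧
          g ((n : ℝ) ^ ((1 : ℝ) - ε)) < w (a, i)) ∨
        (a = c + (fun j => if j = i then 1 else 0) ∧
          g ((n : ℝ) ^ ((1 : ℝ) - ε)) < w (c, i))) x y)
    (D : ℕ → Set (Fin d → ℤ))
    (hDne : ∀ n, (D n).Nonempty)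
    (hDinf : ∀ n x, x ∈ D n ↔ {y | openConn n x y}.Infinite)
    (hDconn : ∀ n, ∀ x ∈ D n, ∀ y ∈ D n, openConn n x y)
    (N0 : ℕ)
    (hcount : ∀ n ≥ N0, ∀ z : Fin d → ℤ, (∀ i, |z i| ≤ (n : ℤ) + b) →
      (((Fintype.piFinset fun i => Finset.Icc (z i - b) (z i + b)) ×ˢ
          (Finset.univ : Finset (Fin d))).filter
        (fun e => w e ≤ g ((n : ℝ) ^ ((1 : ℝ) - ε)))).card ≤ 3 * d - 1) :
    ∃ N : ℕ, ∀ n ≥ N, ∀ z : Fin d → ℤ,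
      {x : Fin d → ℤ | (∀ i, |x i - z i| ≤ (b : ℤ)) ∧ (∀ i, |x i| ≤ (n : ℤ)) ∧
        x ∉ D n}.Subsingleton :=
  stmt15_general d b hd hb ε hε1 w g hganti openConn hopenConn D hDne hDinf N0 hcount
end

section
/- If the conductance distribution function F varies regularly at zero with index γ ≥ 0, then the distribution function F_π of the sum π of 2d independent copies of w varies regularly at zero with index 2dγ. -/
/-!
For independent nonnegative `X`, `Y` and `u > 0`, cut the range of `Y` into the cells
`(j u / k, (j + 1) u / k]`. Then `P[X + Y ≤ u]` lies between the two Riemann–Stieltjes sums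
`∑ⱼ P[Y ∈ cellⱼ] · P[X ≤ (1 - (j + 1) / k) u]` and `∑ⱼ P[Y ∈ cellⱼ] · P[X ≤ (1 - j / k) u]`.
If `F_X` and `F_Y` vary regularly at `0` with indices `a` and `b`, then after division by
`F_X(u) F_Y(u)` both sums converge as `u → 0⁺`, to Riemann–Stieltjes sums of `∫ (1 - t)^a d(t^b)`
whose gap vanishes as `k → ∞`. Hence `F_{X+Y}(u) / (F_X(u) F_Y(u))` has a positive limit, so
`F_{X+Y}` varies regularly with index `a + b`; induction over the summands gives the index `2dγ`.
This direct argument replaces the Laplace transform and Karamata's Tauberian theorem.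
-/

open MeasureTheory ProbabilityTheory Filter Topology Set

noncomputable section

def RegularlyVaryingAtZero (G : ℝ → ℝ) (ρ : ℝ) : Prop :=
  (∀ᶠ u in 𝓝[>] 0, 0 < G u) ∧
    ∀ C : ℝ, 0 < C → Tendsto (fun u => G (C * u) / G u) (𝓝[>] 0) (𝓝 (C ^ ρ))

def SlowlyVaryingAtZero (L : ℝ → ℝ) : Prop :=
  ∀ C : ℝ, 0 < C → Tendsto (fun u => L (C * u) / L u) (𝓝[>] 0) (𝓝 1)

/-- The limit of `F (t * u) / F u` as `u → 0⁺`, for `t ≠ 0`, when `F` vanishes on `(-∞, 0)` and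
varies regularly at `0` with index `b`. -/
def regVarProfile (b t : ℝ) : ℝ := if t < 0 then 0 else t ^ b

lemma tendsto_const_mul_nhdsGT_zero {C : ℝ} (hC : 0 < C) :
    Tendsto (fun u : ℝ => C * u) (𝓝[>] 0) (𝓝[>] 0) := by
  simpa using TendstoNhdsWithinIoi.const_mul hC (tendsto_id (x := 𝓝[>] (0 : ℝ)))

lemma monotone_regVarProfile {b : ℝ} (hb : 0 ≤ b) : Monotone (regVarProfile b) := by
  intro s t hst
  unfold regVarProfile
  split_ifs with hs ht ht
  · rfl
  · exact Real.rpow_nonneg (not_lt.1 ht) b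
  · linarith
  · exact Real.rpow_le_rpow (not_lt.1 hs) hst hb

namespace RegularlyVaryingAtZero

variable {F G H L : ℝ → ℝ} {a b ρ : ℝ}

lemma of_eq_rpow_mul (hG : ∀ u, 0 ≤ G u) (hGL : ∀ u : ℝ, 0 < u → G u = u ^ ρ * L u)
    (hL : SlowlyVaryingAtZero L) : RegularlyVaryingAtZero G ρ := by
  have hL0 : ∀ᶠ u in 𝓝[>] 0, L u ≠ 0 := by
    have h1 : Tendsto (fun u => L u / L u) (𝓝[>] 0) (𝓝 1) := by simpa using hL 1 one_pos
    filter_upwards [h1.eventually_ne one_ne_zero] with u hu h0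
    simp [h0] at hu
  refine ⟨?_, fun C hC => ?_⟩
  · filter_upwards [hL0, self_mem_nhdsWithin] with u hLu (hu : 0 < u)
    exact (hG u).lt_of_ne' (hGL u hu ▸ mul_ne_zero (Real.rpow_pos_of_pos hu ρ).ne' hLu)
  · have hratio : ∀ᶠ u in 𝓝[>] 0, C ^ ρ * (L (C * u) / L u) = G (C * u) / G u := by
      filter_upwards [self_mem_nhdsWithin] with u (hu : 0 < u)
      have : u ^ ρ ≠ 0 := (Real.rpow_pos_of_pos hu ρ).ne'
      rw [hGL u hu, hGL _ (mul_pos hC hu), Real.mul_rpow hC.le hu.le]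
      field_simp
    simpa using ((hL C hC).const_mul (C ^ ρ)).congr' hratio

lemma slowlyVaryingAtZero_div_rpow (hG : RegularlyVaryingAtZero G ρ) :
    SlowlyVaryingAtZero fun u => G u / u ^ ρ := by
  intro C hC
  have hCρ : C ^ ρ ≠ 0 := (Real.rpow_pos_of_pos hC ρ).ne'
  have hratio : ∀ᶠ u in 𝓝[>] 0,
      G (C * u) / G u / C ^ ρ = G (C * u) / (C * u) ^ ρ / (G u / u ^ ρ) := by
    filter_upwards [self_mem_nhdsWithin] with u (hu : 0 < u)
    have : u ^ ρ ≠ 0 := (Real.rpow_pos_of_pos hu ρ).ne'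
    rw [Real.mul_rpow hC.le hu.le]
    field_simp
  simpa [div_self hCρ] using ((hG.2 C hC).div_const (C ^ ρ)).congr' hratio

lemma mul (hF : RegularlyVaryingAtZero F a) (hG : RegularlyVaryingAtZero G b) :
    RegularlyVaryingAtZero (fun u => F u * G u) (a + b) := by
  refine ⟨by filter_upwards [hF.1, hG.1] with u hFu hGu using mul_pos hFu hGu, fun C hC => ?_⟩
  simp_rw [mul_div_mul_comm, Real.rpow_add hC]
  exact (hF.2 C hC).mul (hG.2 C hC)

lemma of_tendsto_div (hG : RegularlyVaryingAtZero G ρ) {c : ℝ} (hc : 0 < c)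
    (hH : Tendsto (fun u => H u / G u) (𝓝[>] 0) (𝓝 c)) : RegularlyVaryingAtZero H ρ := by
  have hHpos : ∀ᶠ u in 𝓝[>] 0, 0 < H u := by
    filter_upwards [hG.1, hH.eventually (eventually_gt_nhds hc)] with u hGu hr
    exact (div_pos_iff_of_pos_right hGu).1 hr
  refine ⟨hHpos, fun C hC => ?_⟩
  have hmul := tendsto_const_mul_nhdsGT_zero hC
  have hratio : ∀ᶠ u in 𝓝[>] 0,
      H (C * u) / G (C * u) / (H u / G u) * (G (C * u) / G u) = H (C * u) / H u := by
    filter_upwards [hG.1, hmul.eventually hG.1] with u hGu hGCu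
    field_simp
  simpa [div_self hc.ne'] using (((hH.comp hmul).div hH hc.ne').mul (hG.2 C hC)).congr' hratio

lemma tendsto_div_of_ne_zero (hF : RegularlyVaryingAtZero F b) (hF0 : ∀ t < 0, F t = 0)
    {t : ℝ} (ht : t ≠ 0) :
    Tendsto (fun u => F (t * u) / F u) (𝓝[>] 0) (𝓝 (regVarProfile b t)) := by
  rcases ht.lt_or_gt with ht | ht
  · rw [regVarProfile, if_pos ht]
    refine tendsto_const_nhds.congr' ?_
    filter_upwards [self_mem_nhdsWithin] with u (hu : 0 < u)
    rw [hF0 _ (mul_neg_of_neg_of_pos ht hu), zero_div]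
  · rw [regVarProfile, if_neg ht.not_gt]
    exact hF.2 t ht

end RegularlyVaryingAtZero

lemma exists_tendsto_of_squeeze {α : Type*} {l : Filter α} [l.NeBot] {r : α → ℝ}
    (h : ∀ ε > 0, ∃ lo up : α → ℝ, ∃ s S : ℝ, Tendsto lo l (𝓝 s) ∧ Tendsto up l (𝓝 S) ∧
      S - s < ε ∧ ∀ᶠ x in l, lo x ≤ r x ∧ r x ≤ up x) :
    ∃ c, Tendsto r l (𝓝 c) := by
  refine cauchy_map_iff_exists_tendsto.1 (Metric.cauchy_iff.2 ⟨map_neBot, fun ε hε => ?_⟩)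
  obtain ⟨lo, up, s, S, hlo, hup, hgap, hr⟩ := h (ε / 3) (by positivity)
  refine ⟨Ioo (s - ε / 3) (S + ε / 3), mem_map.2 ?_, fun x hx y hy => ?_⟩
  · filter_upwards [hlo.eventually (eventually_gt_nhds (by linarith : s - ε / 3 < s)),
      hup.eventually (eventually_lt_nhds (by linarith : S < S + ε / 3)), hr] with x h1 h2 h3
    exact ⟨h1.trans_le h3.1, h3.2.trans_lt h2⟩
  · rw [Real.dist_eq, abs_lt]
    constructor <;> linarith [hx.1, hx.2, hy.1, hy.2]

/-- Grid points `j / k`, except that the first cell `(-u, u / k]` also catches an atom at `0`. -/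
def stieltjesGrid (k j : ℕ) : ℝ := if j = 0 then -1 else j / k

/-- For `m = 1` a lower and for `m = 0` an upper Riemann–Stieltjes sum for `∫ G ((1 - t) u) dF(t u)`
over `t ∈ [0, 1]`, on the cells `(stieltjesGrid k j, stieltjesGrid k (j + 1)]`. -/
def stieltjesSum (F G : ℝ → ℝ) (k m : ℕ) (u : ℝ) : ℝ :=
  ∑ j ∈ Finset.range (k - m),
    (F (stieltjesGrid k (j + 1) * u) - F (stieltjesGrid k j * u)) * G ((1 - (j + m : ℝ) / k) * u)

lemma stieltjesGrid_zero (k : ℕ) : stieltjesGrid k 0 = -1 := rfl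

lemma stieltjesGrid_of_ne_zero (k : ℕ) {j : ℕ} (hj : j ≠ 0) : stieltjesGrid k j = j / k := if_neg hj

lemma stieltjesGrid_succ (k j : ℕ) : stieltjesGrid k (j + 1) = (j + 1) / k := by
  rw [stieltjesGrid_of_ne_zero k j.succ_ne_zero, Nat.cast_succ]

lemma stieltjesGrid_self {k : ℕ} (hk : k ≠ 0) : stieltjesGrid k k = 1 := by
  rw [stieltjesGrid_of_ne_zero k hk, div_self (Nat.cast_ne_zero.2 hk)]

lemma stieltjesGrid_ne_zero {k : ℕ} (hk : k ≠ 0) (j : ℕ) : stieltjesGrid k j ≠ 0 := by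
  rcases eq_or_ne j 0 with rfl | hj
  · norm_num [stieltjesGrid_zero]
  · rw [stieltjesGrid_of_ne_zero k hj]
    exact div_ne_zero (Nat.cast_ne_zero.2 hj) (Nat.cast_ne_zero.2 hk)

lemma monotone_stieltjesGrid (k : ℕ) : Monotone (stieltjesGrid k) := by
  refine monotone_nat_of_le_succ fun j => ?_
  rcases eq_or_ne j 0 with rfl | hj
  · rw [stieltjesGrid_zero, stieltjesGrid_succ]
    have : (0 : ℝ) ≤ ((0 : ℕ) + 1) / k := by positivity
    linarith
  · rw [stieltjesGrid_of_ne_zero k hj, stieltjesGrid_succ]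
    gcongr
    linarith

lemma tendsto_stieltjesSum_div_of_tendsto {l : Filter ℝ} {F G f g : ℝ → ℝ} {k m : ℕ}
    (hF : ∀ j, Tendsto (fun u => F (stieltjesGrid k j * u) / F u) l (𝓝 (f (stieltjesGrid k j))))
    (hG : ∀ j < k - m, Tendsto (fun u => G ((1 - (j + m : ℝ) / k) * u) / G u) l
      (𝓝 (g (1 - (j + m : ℝ) / k)))) :
    Tendsto (fun u => stieltjesSum F G k m u / (F u * G u)) l (𝓝 (stieltjesSum f g k m 1)) := by
  simp only [stieltjesSum, mul_one, Finset.sum_div]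
  refine tendsto_finsetSum _ fun j hj => ?_
  simp_rw [mul_div_mul_comm, sub_div]
  exact ((hF _).sub (hF _)).mul (hG j (Finset.mem_range.1 hj))

lemma stieltjesSum_succ_sub (f g : ℝ → ℝ) (n : ℕ) :
    stieltjesSum f g (n + 1) 0 1 - stieltjesSum f g (n + 1) 1 1 =
      ∑ j ∈ Finset.range n, (f (stieltjesGrid (n + 1) (j + 1)) - f (stieltjesGrid (n + 1) j)) *
          (g (1 - j / (n + 1 : ℕ)) - g (1 - (j + 1) / (n + 1 : ℕ))) +
        (f (stieltjesGrid (n + 1) (n + 1)) - f (stieltjesGrid (n + 1) n)) *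
          g (1 - n / (n + 1 : ℕ)) := by
  simp only [stieltjesSum, mul_one, Nat.cast_zero, add_zero, Nat.cast_one, Nat.add_sub_cancel,
    Nat.sub_zero, Finset.sum_range_succ, mul_sub, Finset.sum_sub_distrib]
  ring

lemma one_sub_div_mem_Icc {j k : ℕ} (h : j ≤ k) : 1 - (j : ℝ) / k ∈ Icc 0 1 := by
  refine ⟨sub_nonneg.2 (div_le_one_of_le₀ (by exact_mod_cast h) k.cast_nonneg), ?_⟩
  have : 0 ≤ (j : ℝ) / k := by positivity
  linarith

lemma stieltjesSum_succ_sub_le {f g : ℝ → ℝ} (hf : Monotone f) {n : ℕ} {η : ℝ}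
    (hstep : ∀ j < n, g (1 - j / (n + 1 : ℕ)) - g (1 - (j + 1) / (n + 1 : ℕ)) ≤ η)
    (hlast : g (1 - n / (n + 1 : ℕ)) ≤ 1) :
    stieltjesSum f g (n + 1) 0 1 - stieltjesSum f g (n + 1) 1 1 ≤
      (f (stieltjesGrid (n + 1) n) - f (stieltjesGrid (n + 1) 0)) * η +
        (f (stieltjesGrid (n + 1) (n + 1)) - f (stieltjesGrid (n + 1) n)) := by
  have hΔ : ∀ j, 0 ≤ f (stieltjesGrid (n + 1) (j + 1)) - f (stieltjesGrid (n + 1) j) := fun j =>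
    sub_nonneg.2 (hf (monotone_stieltjesGrid _ j.le_succ))
  rw [stieltjesSum_succ_sub]
  refine add_le_add ?_ (mul_le_of_le_one_right (hΔ n) hlast)
  calc _ ≤ ∑ j ∈ Finset.range n,
          (f (stieltjesGrid (n + 1) (j + 1)) - f (stieltjesGrid (n + 1) j)) * η :=
        Finset.sum_le_sum fun j hj =>
          mul_le_mul_of_nonneg_left (hstep j (Finset.mem_range.1 hj)) (hΔ j)
    _ = _ := by rw [← Finset.sum_mul, Finset.sum_range_sub (fun j => f (stieltjesGrid (n + 1) j))]

lemma exists_stieltjesSum_sub_lt {a b ε : ℝ} (ha : 0 ≤ a) (hb : 0 ≤ b) (hε : 0 < ε) :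
    ∃ k, k ≠ 0 ∧ stieltjesSum (regVarProfile b) (· ^ a) k 0 1 -
      stieltjesSum (regVarProfile b) (· ^ a) k 1 1 < ε := by
  obtain ⟨δ, hδ, hg⟩ := Metric.uniformContinuousOn_iff.1
    (isCompact_Icc.uniformContinuousOn_of_continuous (Real.continuous_rpow_const ha).continuousOn)
    (ε / 2) (half_pos hε)
  have hmesh : Tendsto (fun n : ℕ => 1 / ((n : ℝ) + 1)) atTop (𝓝 0) :=
    tendsto_one_div_add_atTop_nhds_zero_nat
  have hlast : Tendsto (fun n : ℕ => ((n : ℝ) / (n + 1)) ^ b) atTop (𝓝 1) := by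
    simpa using (tendsto_natCast_div_add_atTop (1 : ℝ)).rpow_const (Or.inr hb)
  obtain ⟨n, hn0, hnδ, hnb⟩ := ((eventually_ne_atTop 0).and
    ((hmesh.eventually (eventually_lt_nhds hδ)).and
      (hlast.eventually (eventually_gt_nhds (by linarith : 1 - ε / 2 < 1))))).exists
  refine ⟨n + 1, n.succ_ne_zero, ?_⟩
  have hk : ((n + 1 : ℕ) : ℝ) = n + 1 := by push_cast; ring
  have hstep : ∀ j < n,
      (1 - j / (n + 1 : ℕ) : ℝ) ^ a - (1 - (j + 1) / (n + 1 : ℕ)) ^ a ≤ ε / 2 := by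
    intro j hj
    have hx := one_sub_div_mem_Icc (k := n + 1) (j := j) (by omega)
    have hy := one_sub_div_mem_Icc (k := n + 1) (j := j + 1) (by omega)
    rw [Nat.cast_succ j] at hy
    have hdist : dist (1 - j / (n + 1 : ℕ) : ℝ) (1 - (j + 1) / (n + 1 : ℕ)) < δ := by
      rw [Real.dist_eq, hk, show (1 - j / (n + 1) : ℝ) - (1 - (j + 1) / (n + 1)) = 1 / (n + 1) by
        field_simp; ring, abs_of_pos (by positivity)]
      exact hnδ
    exact (le_abs_self _).trans (Real.dist_eq _ _ ▸ (hg _ hx _ hy hdist).le)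
  have hlast_le : (1 - n / (n + 1 : ℕ) : ℝ) ^ a ≤ 1 := by
    have hx := one_sub_div_mem_Icc (k := n + 1) (j := n) (by omega)
    exact Real.rpow_le_one hx.1 hx.2 ha
  have hf0 : regVarProfile b (stieltjesGrid (n + 1) 0) = 0 :=
    if_pos (by norm_num [stieltjesGrid_zero])
  have hf1 : regVarProfile b (stieltjesGrid (n + 1) (n + 1)) = 1 := by
    simp [stieltjesGrid_self n.succ_ne_zero, regVarProfile]
  have hfn : regVarProfile b (stieltjesGrid (n + 1) n) = ((n : ℝ) / (n + 1)) ^ b := by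
    rw [stieltjesGrid_of_ne_zero _ hn0, hk]
    exact if_neg (not_lt.2 (by positivity))
  have hfn_le : ((n : ℝ) / (n + 1)) ^ b ≤ 1 :=
    Real.rpow_le_one (by positivity) (div_le_one_of_le₀ (by linarith) (by positivity)) hb
  have hgap := stieltjesSum_succ_sub_le (g := (· ^ a)) (monotone_regVarProfile hb) hstep hlast_le
  rw [hf0, hf1, hfn, sub_zero] at hgap
  nlinarith

lemma RegularlyVaryingAtZero.tendsto_stieltjesSum_div {F G : ℝ → ℝ} {a b : ℝ}
    (hF : RegularlyVaryingAtZero F b) (hF0 : ∀ t < 0, F t = 0) (hG : RegularlyVaryingAtZero G a)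
    {k : ℕ} (hk : k ≠ 0) (m : ℕ) :
    Tendsto (fun u => stieltjesSum F G k m u / (F u * G u)) (𝓝[>] 0)
      (𝓝 (stieltjesSum (regVarProfile b) (· ^ a) k m 1)) := by
  refine tendsto_stieltjesSum_div_of_tendsto (fun j => hF.tendsto_div_of_ne_zero hF0
    (stieltjesGrid_ne_zero hk j)) fun j hj => hG.2 _ ?_
  have : (j + m : ℝ) < k := by exact_mod_cast (by omega : j + m < k)
  rw [sub_pos, div_lt_one (by positivity)]
  exact this

section Convolution

variable {Ω : Type*} [MeasurableSpace Ω] {μ : Measure Ω} [IsProbabilityMeasure μ] {X Y : Ω → ℝ}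

lemma cdf_map_apply (hX : Measurable X) (t : ℝ) : cdf (μ.map X) t = μ.real (X ⁻¹' Iic t) := by
  have := Measure.isProbabilityMeasure_map (μ := μ) hX.aemeasurable
  rw [cdf_eq_real, map_measureReal_apply hX measurableSet_Iic]

lemma cdf_map_of_neg (hX : Measurable X) (hX0 : ∀ ω, 0 ≤ X ω) {t : ℝ} (ht : t < 0) :
    cdf (μ.map X) t = 0 := by
  have : X ⁻¹' Iic t = ∅ := eq_empty_of_forall_notMem fun ω hω => (ht.trans_le (hX0 ω)).not_ge hω
  rw [cdf_map_apply hX, this, measureReal_empty]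

lemma measureReal_preimage_Ioc (hY : Measurable Y) {α β : ℝ} (h : α ≤ β) :
    μ.real (Y ⁻¹' Ioc α β) = cdf (μ.map Y) β - cdf (μ.map Y) α := by
  rw [cdf_map_apply hY, cdf_map_apply hY, ← measureReal_sdiff (preimage_mono (Iic_subset_Iic.2 h))
    (hY measurableSet_Iic), ← preimage_sdiff, Iic_sdiff_Iic]

lemma stieltjesSum_cdf_map_eq (hX : Measurable X) (hY : Measurable Y) (hXY : IndepFun X Y μ)
    (k m : ℕ) {u : ℝ} (hu : 0 ≤ u) :
    stieltjesSum (cdf (μ.map Y)) (cdf (μ.map X)) k m u = ∑ j ∈ Finset.range (k - m),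
      μ.real (X ⁻¹' Iic ((1 - (j + m : ℝ) / k) * u) ∩
        Y ⁻¹' Ioc (stieltjesGrid k j * u) (stieltjesGrid k (j + 1) * u)) := by
  refine Finset.sum_congr rfl fun j _ => ?_
  rw [measureReal_def, hXY.measure_inter_preimage_eq_mul _ _ measurableSet_Iic measurableSet_Ioc,
    ENNReal.toReal_mul, ← measureReal_def, ← measureReal_def, cdf_map_apply hX,
    measureReal_preimage_Ioc hY
      (mul_le_mul_of_nonneg_right (monotone_stieltjesGrid k j.le_succ) hu), mul_comm]

lemma stieltjesSum_le_cdf_add (hX : Measurable X) (hY : Measurable Y) (hXY : IndepFun X Y μ)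
    (k : ℕ) {u : ℝ} (hu : 0 ≤ u) :
    stieltjesSum (cdf (μ.map Y)) (cdf (μ.map X)) k 1 u ≤ cdf (μ.map (X + Y)) u := by
  have hcells := ((monotone_stieltjesGrid k).mul_const hu).pairwise_disjoint_on_Ioc_succ
  have hdisj : (Finset.range (k - 1) : Set ℕ).PairwiseDisjoint fun j =>
      X ⁻¹' Iic ((1 - (j + (1 : ℕ) : ℝ) / k) * u) ∩
        Y ⁻¹' Ioc (stieltjesGrid k j * u) (stieltjesGrid k (j + 1) * u) := fun i _ j _ hij =>
    ((hcells hij).preimage Y).mono inter_subset_right inter_subset_right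
  rw [stieltjesSum_cdf_map_eq hX hY hXY k 1 hu, cdf_map_apply (hX.add hY),
    ← measureReal_biUnion_finset hdisj fun j _ =>
      (hX measurableSet_Iic).inter (hY measurableSet_Ioc)]
  refine measureReal_mono (iUnion₂_subset fun j _ ω ⟨hXω, hYω⟩ => ?_) (measure_ne_top _ _)
  have hYω' : Y ω ≤ (j + 1) / k * u := stieltjesGrid_succ k j ▸ hYω.2
  change X ω ≤ (1 - (j + (1 : ℕ) : ℝ) / k) * u at hXω
  change X ω + Y ω ≤ u
  rw [Nat.cast_one, sub_mul, one_mul] at hXω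
  linarith

lemma cdf_add_le_stieltjesSum (hX : Measurable X) (hY : Measurable Y) (hX0 : ∀ ω, 0 ≤ X ω)
    (hY0 : ∀ ω, 0 ≤ Y ω) (hXY : IndepFun X Y μ) {k : ℕ} (hk : k ≠ 0) {u : ℝ} (hu : 0 < u) :
    cdf (μ.map (X + Y)) u ≤ stieltjesSum (cdf (μ.map Y)) (cdf (μ.map X)) k 0 u := by
  rw [stieltjesSum_cdf_map_eq hX hY hXY k 0 hu.le, cdf_map_apply (hX.add hY)]
  refine (measureReal_mono (fun ω (hω : X ω + Y ω ≤ u) => ?_) (measure_ne_top _ _)).trans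
    (measureReal_biUnion_finset_le _ _)
  have hYω : Y ω ∈ Ioc (stieltjesGrid k 0 * u) (stieltjesGrid k k * u) := by
    rw [stieltjesGrid_zero, stieltjesGrid_self hk]
    constructor <;> linarith [hX0 ω, hY0 ω]
  obtain ⟨j, hj, hYj⟩ :=
    mem_iUnion₂.1 (Ioc_subset_biUnion_Ioc k (fun j => stieltjesGrid k j * u) hYω)
  refine mem_iUnion₂.2 ⟨j, hj, ?_, hYj⟩
  have hjY : (j : ℝ) / k * u ≤ Y ω := by
    rcases eq_or_ne j 0 with rfl | hj0
    · simpa using hY0 ω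
    · exact (stieltjesGrid_of_ne_zero k hj0 ▸ hYj.1).le
  change X ω ≤ (1 - (j + (0 : ℕ) : ℝ) / k) * u
  rw [Nat.cast_zero, add_zero, sub_mul, one_mul]
  linarith

theorem RegularlyVaryingAtZero.cdf_add (hX : Measurable X) (hY : Measurable Y)
    (hX0 : ∀ ω, 0 ≤ X ω) (hY0 : ∀ ω, 0 ≤ Y ω) (hXY : IndepFun X Y μ) {a b : ℝ} (ha : 0 ≤ a)
    (hb : 0 ≤ b) (hXa : RegularlyVaryingAtZero (cdf (μ.map X)) a)
    (hYb : RegularlyVaryingAtZero (cdf (μ.map Y)) b) :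
    RegularlyVaryingAtZero (cdf (μ.map (X + Y))) (a + b) := by
  set F := cdf (μ.map Y)
  set G := cdf (μ.map X)
  set H := cdf (μ.map (X + Y))
  have hF0 : ∀ t < 0, F t = 0 := fun t ht => cdf_map_of_neg hY hY0 ht
  have hsq : ∀ k, k ≠ 0 → ∀ᶠ u in 𝓝[>] 0, stieltjesSum F G k 1 u / (F u * G u) ≤
      H u / (F u * G u) ∧ H u / (F u * G u) ≤ stieltjesSum F G k 0 u / (F u * G u) := by
    intro k hk
    filter_upwards [(hYb.mul hXa).1, self_mem_nhdsWithin] with u hFG (hu : 0 < u)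
    exact ⟨div_le_div_of_nonneg_right (stieltjesSum_le_cdf_add hX hY hXY k hu.le) hFG.le,
      div_le_div_of_nonneg_right (cdf_add_le_stieltjesSum hX hY hX0 hY0 hXY hk hu) hFG.le⟩
  obtain ⟨c, hc⟩ := exists_tendsto_of_squeeze fun ε hε => by
    obtain ⟨k, hk, hgap⟩ := exists_stieltjesSum_sub_lt ha hb hε
    exact ⟨_, _, _, _, hYb.tendsto_stieltjesSum_div hF0 hXa hk 1,
      hYb.tendsto_stieltjesSum_div hF0 hXa hk 0, hgap, hsq k hk⟩
  have hc_pos : 0 < c := by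
    have hlow : stieltjesSum (regVarProfile b) (· ^ a) 2 1 1 ≤ c :=
      le_of_tendsto_of_tendsto (hYb.tendsto_stieltjesSum_div hF0 hXa two_ne_zero 1) hc
        ((hsq 2 two_ne_zero).mono fun _ h => h.1)
    have : 0 < stieltjesSum (regVarProfile b) (· ^ a) 2 1 1 := by
      norm_num [stieltjesSum, regVarProfile, stieltjesGrid]
      positivity
    linarith
  rw [add_comm]
  exact (hYb.mul hXa).of_tendsto_div hc_pos hc

theorem RegularlyVaryingAtZero.cdf_sum {ι : Type*} {w : ι → Ω → ℝ} (hmeas : ∀ i, Measurable (w i))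
    (hnn : ∀ i ω, 0 ≤ w i ω) (hindep : iIndepFun w μ) {γ : ℝ} (hγ : 0 ≤ γ)
    (hw : ∀ i, RegularlyVaryingAtZero (cdf (μ.map (w i))) γ) {s : Finset ι} (hs : s.Nonempty) :
    RegularlyVaryingAtZero (cdf (μ.map fun ω => ∑ i ∈ s, w i ω)) (s.card * γ) := by
  induction hs using Finset.Nonempty.cons_induction with
  | singleton i => simpa using hw i
  | cons i s hi hs ih =>
    have hindep_i := (hindep.indepFun_finsetSum_of_notMem hmeas hi).symm
    rw [Finset.sum_fn] at hindep_i
    simp_rw [Finset.sum_cons]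
    rw [Finset.card_cons, Nat.cast_succ, add_one_mul, add_comm]
    exact (hw i).cdf_add (hmeas i) (Finset.measurable_sum s fun j _ => hmeas j) (hnn i)
      (fun ω => Finset.sum_nonneg fun j _ => hnn j ω) hindep_i hγ (by positivity) ih

end Convolution

end

/-- If the conductance distribution function `F` varies regularly at zero with index
`γ ≥ 0`, then the distribution function `F_π` of the sum `π` of `2d` independent copies
of `w` varies regularly at zero with index `2dγ`.  (Regular variation at zero of index
`ρ` means `F(u) = u^ρ L(u)` with `L(Cu)/L(u) → 1` as `u → 0⁺`, for every `C > 0`.) -/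
theorem stmt18 {Ω : Type*} [MeasurableSpace Ω] (μ : Measure Ω) [IsProbabilityMeasure μ]
    (d : ℕ) (hd : 0 < d) (γ : ℝ) (hγ : 0 ≤ γ)
    (w : Fin (2 * d) → Ω → ℝ)
    (hmeas : ∀ i, Measurable (w i))
    (hnn : ∀ i ω, 0 ≤ w i ω)
    (hindep : iIndepFun w μ)
    (hident : ∀ i j, IdentDistrib (w i) (w j) μ μ)
    (F Fpi : ℝ → ℝ)
    (hF : ∀ u, F u = (μ {ω | w ⟨0, by omega⟩ ω ≤ u}).toReal)
    (hFpi : ∀ u, Fpi u = (μ {ω | (∑ i, w i ω) ≤ u}).toReal)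
    (hRV : ∃ L : ℝ → ℝ, (∀ u : ℝ, 0 < u → F u = u ^ γ * L u) ∧
      ∀ C : ℝ, 0 < C → Tendsto (fun u => L (C * u) / L u)
        (nhdsWithin 0 (Set.Ioi 0)) (nhds 1)) :
    ∃ L : ℝ → ℝ, (∀ u : ℝ, 0 < u → Fpi u = u ^ (2 * (d : ℝ) * γ) * L u) ∧
      ∀ C : ℝ, 0 < C → Tendsto (fun u => L (C * u) / L u)
        (nhdsWithin 0 (Set.Ioi 0)) (nhds 1) := by
  obtain ⟨L, hFL, hL⟩ := hRV
  have hFrv : RegularlyVaryingAtZero F γ :=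
    .of_eq_rpow_mul (fun u => hF u ▸ ENNReal.toReal_nonneg) hFL hL
  have hcdf : ∀ i, cdf (μ.map (w i)) = F := fun i => funext fun u => by
    rw [(hident i ⟨0, by omega⟩).map_eq, hF u, cdf_map_apply (hmeas _)]
    rfl
  have hcdf_sum : cdf (μ.map fun ω => ∑ i, w i ω) = Fpi := funext fun u => by
    rw [hFpi u, cdf_map_apply (Finset.measurable_sum _ fun i _ => hmeas i)]
    rfl
  have hsum := RegularlyVaryingAtZero.cdf_sum hmeas hnn hindep hγ (fun i => hcdf i ▸ hFrv)
    (Finset.univ_nonempty_iff.2 ⟨⟨0, by omega⟩⟩)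
  rw [hcdf_sum, Finset.card_univ, Fintype.card_fin, Nat.cast_mul, Nat.cast_two] at hsum
  exact ⟨fun u => Fpi u / u ^ (2 * (d : ℝ) * γ),
    fun u hu => (mul_div_cancel₀ _ (Real.rpow_pos_of_pos hu _).ne').symm,
    hsum.slowlyVaryingAtZero_div_rpow⟩
end
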